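/- arXiv:1007.2694 — 10 statements merged into one kernel-verified Lean document; each statement's English description precedes it below -/
import Mathlib

section
/- Every CSR game with sum utilities in which the access cost function d is symmetric (d(i,j) = d(j,i) for all i,j) and the object preferences are binary (r(i,α) ∈ {0,1} for all i,α) has a pure Nash equilibrium; moreover, the game has the finite improvement property: there is no infinite sequence of placements P^0, P^1, P^2, … in which each P^{t+1} is obtained from P^t by a single node i changing its stored object so that cost_i(P^{t+1}) < cost_i(P^t). -/
open Finset

/-- Access cost of node `i` for object `α` under placement `P`. -/
noncomputable def accessCost {V O : Type*} [Fintype V] [DecidableEq O]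
    (d : V → V → ℝ) (D : ℝ) (P : V → O) (i : V) (α : O) : ℝ :=
  haveI := Classical.decEq ℝ
  (insert D ((Finset.univ.filter (fun j => P j = α)).image (d i))).min'
    (Finset.insert_nonempty _ _)

/-- Total cost of node `i` under placement `P` (sum utilities). -/
noncomputable def nodeCost {V O : Type*} [Fintype V] [Fintype O] [DecidableEq O]
    (d : V → V → ℝ) (r : V → O → ℝ) (D : ℝ) (P : V → O) (i : V) : ℝ :=
  ∑ α : O, r i α * accessCost d D P i α

open Function

/-!
Call the benefit of node `j` what its cache saves it: `r j (P j)` times the distance from `j` to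
the nearest other copy of `P j`, capped at `D`. Cost plus benefit of a node is the cost it would
pay with an empty cache, which does not depend on what the node stores; so an improving move of
`i` is exactly one that raises the benefit of `i`, from `v` to some `a > v`. With binary
preferences and symmetric distances, the benefit of every other node either does not decrease or
ends up at least `a`: a node that now shares the new object of `i` is at distance at least `a`
from `i`. So improving moves increase the sorted vector of benefits lexicographically, which
`lexPotential` encodes as a real potential, and the finiteness of the set of placements gives
both an equilibrium and the finite improvement property.
-/

section LexPotential

variable {ι : Type*} [Fintype ι]

noncomputable def rankIn (T : Finset ℝ) (t : ℝ) : ℕ := #{s ∈ T | s < t}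

lemma rankIn_mono (T : Finset ℝ) {s t : ℝ} (hst : s ≤ t) : rankIn T s ≤ rankIn T t :=
  card_le_card fun x hx => by
    simp only [mem_filter] at hx ⊢
    exact ⟨hx.1, hx.2.trans_le hst⟩

lemma rankIn_lt {T : Finset ℝ} {s t : ℝ} (hs : s ∈ T) (hst : s < t) :
    rankIn T s < rankIn T t := by
  refine card_lt_card ((ssubset_iff_of_subset fun x hx => ?_).2 ⟨s, ?_, ?_⟩)
  · simp only [mem_filter] at hx ⊢
    exact ⟨hx.1, hx.2.trans hst⟩
  · simp [hs, hst]
  · simp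

/-- The weight `-q ^ rank` drops by the factor `q = (card ι + 1)⁻¹` per rank, so raising one
coordinate past a value of `T` outweighs any number of other coordinates dropping while staying
above that value: the potential numerically encodes the lexicographic order of sorted vectors. -/
noncomputable def lexPotential (T : Finset ℝ) (u : ι → ℝ) : ℝ :=
  ∑ j, -((Fintype.card ι : ℝ) + 1)⁻¹ ^ rankIn T (u j)

theorem lexPotential_lt {T : Finset ℝ} {u u' : ι → ℝ} {i : ι} (hT : u i ∈ T)
    (hi : u i < u' i) (hj : ∀ j ≠ i, u j ≤ u' j ∨ u' i ≤ u' j) :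
    lexPotential T u < lexPotential T u' := by
  classical
  set n : ℝ := (Fintype.card ι : ℝ)
  set q : ℝ := (n + 1)⁻¹
  set k := rankIn T (u' i)
  have hq0 : 0 < q := by positivity
  have hq1 : q ≤ 1 := inv_le_one_of_one_le₀ (by simp [n])
  have hqn : q * (n + 1) = 1 := inv_mul_cancel₀ (by positivity)
  have hgain : n * q ^ k ≤ q ^ rankIn T (u i) - q ^ k :=
    calc n * q ^ k = (n + 1) * q ^ k - q ^ k := by ring
      _ ≤ (n + 1) * q ^ (rankIn T (u i) + 1) - q ^ k := by
          have := pow_le_pow_of_le_one hq0.le hq1 (rankIn_lt hT hi)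
          gcongr
      _ = q ^ rankIn T (u i) - q ^ k := by
          rw [pow_succ]
          linear_combination q ^ rankIn T (u i) * hqn
  have hloss : ∀ j ∈ univ.erase i, q ^ rankIn T (u' j) - q ^ rankIn T (u j) ≤ q ^ k := by
    intro j hj'
    rcases hj j (ne_of_mem_erase hj') with h | h
    · have := pow_le_pow_of_le_one hq0.le hq1 (rankIn_mono T h)
      linarith [pow_pos hq0 k]
    · have := pow_le_pow_of_le_one hq0.le hq1 (rankIn_mono T h)
      linarith [pow_pos hq0 (rankIn T (u j))]
  have hcard : (#(univ.erase i) : ℝ) = n - 1 := by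
    rw [card_erase_of_mem (mem_univ i), card_univ, Nat.cast_pred (Fintype.card_pos_iff.2 ⟨i⟩)]
  have hlosses := sum_le_card_nsmul _ _ _ hloss
  rw [sum_sub_distrib, nsmul_eq_mul, hcard] at hlosses
  have hsplit (v : ι → ℝ) :
      lexPotential T v = -q ^ rankIn T (v i) - ∑ j ∈ univ.erase i, q ^ rankIn T (v j) := by
    rw [lexPotential, ← add_sum_erase _ _ (mem_univ i), sum_neg_distrib, sub_eq_add_neg]
  rw [hsplit, hsplit]
  linarith [pow_pos hq0 k]

end LexPotential

section NearestCost

variable {V : Type*}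

noncomputable def nearestCost (d : V → V → ℝ) (D : ℝ) (i : V) (s : Finset V) : ℝ :=
  haveI := Classical.decEq ℝ
  (insert D (s.image (d i))).min' (insert_nonempty _ _)

lemma nearestCost_insert [DecidableEq V] (d : V → V → ℝ) (D : ℝ) (i k : V) (s : Finset V) :
    nearestCost d D i (insert k s) = min (d i k) (nearestCost d D i s) := by
  unfold nearestCost
  simp only [image_insert, insert_comm D]
  exact min'_insert _ _ _

lemma nearestCost_anti (d : V → V → ℝ) (D : ℝ) (i : V) {s t : Finset V} (hst : s ⊆ t) :
    nearestCost d D i t ≤ nearestCost d D i s := by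
  classical
  exact min'_subset _ (insert_subset_insert _ (image_subset_image hst))

lemma nearestCost_le_of_mem [DecidableEq V] (d : V → V → ℝ) (D : ℝ) {i j : V} {s : Finset V}
    (hj : j ∈ s) : nearestCost d D i s ≤ d i j := by
  rw [← insert_erase hj, nearestCost_insert]
  exact min_le_left _ _

lemma nearestCost_nonneg {d : V → V → ℝ} {D : ℝ} {i : V} (hd : ∀ j, 0 ≤ d i j)
    (hD0 : 0 ≤ D) (s : Finset V) : 0 ≤ nearestCost d D i s := by
  classical
  refine le_min' _ _ _ fun y hy => ?_
  rcases mem_insert.1 hy with rfl | hy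
  · exact hD0
  · obtain ⟨j, -, rfl⟩ := mem_image.1 hy
    exact hd j

lemma nearestCost_eq_zero_of_mem [DecidableEq V] {d : V → V → ℝ} {D : ℝ} {i : V}
    {s : Finset V} (hd : ∀ j, 0 ≤ d i j) (hdiag : d i i = 0) (hD0 : 0 ≤ D) (hi : i ∈ s) :
    nearestCost d D i s = 0 :=
  le_antisymm (hdiag ▸ nearestCost_le_of_mem d D hi) (nearestCost_nonneg hd hD0 s)

end NearestCost

section Caching

variable {V O : Type*} [Fintype V] [DecidableEq O]

def holders (P : V → O) (α : O) : Finset V := univ.filter fun j => P j = α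

lemma mem_holders {P : V → O} {α : O} {j : V} : j ∈ holders P α ↔ P j = α := by
  simp [holders]

lemma accessCost_eq_nearestCost (d : V → V → ℝ) (D : ℝ) (P : V → O) (i : V) (α : O) :
    accessCost d D P i α = nearestCost d D i (holders P α) := rfl

variable [DecidableEq V]

lemma holders_update_erase (P : V → O) (i : V) (β α : O) :
    (holders (update P i β) α).erase i = (holders P α).erase i := by
  ext j
  by_cases hj : j = i <;> simp [mem_holders, hj]

lemma holders_update_self (P : V → O) (i : V) (β : O) :
    holders (update P i β) β = insert i (holders P β) := by
  ext j
  by_cases hj : j = i <;> simp [mem_holders, hj]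

lemma holders_update_subset (P : V → O) (i : V) {α β : O} (h : α ≠ β) :
    holders (update P i β) α ⊆ holders P α := by
  intro j
  by_cases hj : j = i <;> simp [mem_holders, hj, Ne.symm h]

noncomputable def backupCost (d : V → V → ℝ) (D : ℝ) (P : V → O)
    (j : V) : ℝ :=
  nearestCost d D j ((holders P (P j)).erase j)

noncomputable def cacheBenefit (d : V → V → ℝ) (r : V → O → ℝ) (D : ℝ) (P : V → O)
    (j : V) : ℝ :=
  r j (P j) * backupCost d D P j

lemma accessCost_eq_nearestCost_erase (d : V → V → ℝ) (D : ℝ) (P : V → O) {i : V} {α : O}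
    (h : P i ≠ α) : accessCost d D P i α = nearestCost d D i ((holders P α).erase i) := by
  rw [accessCost_eq_nearestCost, erase_eq_of_notMem (mt mem_holders.1 h)]

lemma backupCost_nonneg {d : V → V → ℝ} {D : ℝ} (hd : ∀ i j, 0 ≤ d i j) (hD0 : 0 ≤ D)
    (P : V → O) (j : V) : 0 ≤ backupCost d D P j :=
  nearestCost_nonneg (hd j) hD0 _

lemma backupCost_update_of_eq (d : V → V → ℝ) (D : ℝ) {P : V → O} {i j : V} {β : O}
    (hj : j ≠ i) (hPj : P j = β) :
    backupCost d D (update P i β) j = min (d j i) (backupCost d D P j) := by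
  rw [backupCost, backupCost, update_of_ne hj, hPj, holders_update_self,
    erase_insert_of_ne hj.symm, nearestCost_insert]

lemma backupCost_le_update_of_ne (d : V → V → ℝ) (D : ℝ) {P : V → O} {i j : V} {β : O}
    (hj : j ≠ i) (hPj : P j ≠ β) :
    backupCost d D P j ≤ backupCost d D (update P i β) j := by
  rw [backupCost, backupCost, update_of_ne hj]
  exact nearestCost_anti _ _ _ (erase_subset_erase _ (holders_update_subset P i hPj))

lemma cacheBenefit_le_backupCost {d : V → V → ℝ} {r : V → O → ℝ} {D : ℝ}
    (hd : ∀ i j, 0 ≤ d i j) (hD0 : 0 ≤ D) (hbin : ∀ i α, r i α = 0 ∨ r i α = 1)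
    (P : V → O) (j : V) : cacheBenefit d r D P j ≤ backupCost d D P j := by
  rcases hbin j (P j) with h | h <;> simp [cacheBenefit, h, backupCost_nonneg hd hD0]

theorem cacheBenefit_le_update_or_mover_le {d : V → V → ℝ} {r : V → O → ℝ} {D : ℝ}
    (hd : ∀ i j, 0 ≤ d i j) (hD0 : 0 ≤ D) (hsym : ∀ i j, d i j = d j i)
    (hbin : ∀ i α, r i α = 0 ∨ r i α = 1) (P : V → O) {i j : V} (β : O) (hj : j ≠ i) :
    cacheBenefit d r D P j ≤ cacheBenefit d r D (update P i β) j ∨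
      cacheBenefit d r D (update P i β) i
        ≤ cacheBenefit d r D (update P i β) j := by
  set P' := update P i β
  have hP'j : P' j = P j := update_of_ne hj β P
  by_cases hPj : P j = β
  · rcases hbin j β with h0 | h1
    · left
      simp [cacheBenefit, hP'j, hPj, h0]
    · have hmover : cacheBenefit d r D P' i ≤ d j i :=
        calc cacheBenefit d r D P' i ≤ backupCost d D P' i :=
              cacheBenefit_le_backupCost hd hD0 hbin P' i
          _ ≤ d i j := nearestCost_le_of_mem d D
              (mem_erase.2 ⟨hj, mem_holders.2 (by simp [P', hP'j, hPj])⟩)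
          _ = d j i := hsym i j
      have hj' : cacheBenefit d r D P' j = min (d j i) (cacheBenefit d r D P j) := by
        simp only [cacheBenefit, hP'j, hPj, h1, one_mul, backupCost_update_of_eq d D hj hPj, P']
      rcases min_choice (d j i) (cacheBenefit d r D P j) with h | h
      · right
        rwa [hj', h]
      · left
        rw [hj', h]
  · left
    have hr : 0 ≤ r j (P j) := by rcases hbin j (P j) with h | h <;> simp [h]
    simp only [cacheBenefit, hP'j]
    exact mul_le_mul_of_nonneg_left (backupCost_le_update_of_ne d D hj hPj) hr

variable [Fintype O]

theorem nodeCost_add_cacheBenefit {d : V → V → ℝ} (r : V → O → ℝ) {D : ℝ}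
    (hd : ∀ i j, 0 ≤ d i j) (hdiag : ∀ i, d i i = 0) (hD0 : 0 ≤ D) (P : V → O) (i : V) :
    nodeCost d r D P i + cacheBenefit d r D P i
      = ∑ α, r i α * nearestCost d D i ((holders P α).erase i) := by
  have hown : accessCost d D P i (P i) = 0 :=
    nearestCost_eq_zero_of_mem (hd i) (hdiag i) hD0 (mem_holders.2 rfl)
  unfold nodeCost cacheBenefit backupCost
  rw [← add_sum_erase _ _ (mem_univ (P i)), ← add_sum_erase _ _ (mem_univ (P i)), hown,
    sum_congr rfl fun α hα => by
      rw [accessCost_eq_nearestCost_erase d D P (ne_of_mem_erase hα).symm]]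
  ring

theorem nodeCost_update_add_cacheBenefit {d : V → V → ℝ} (r : V → O → ℝ) {D : ℝ}
    (hd : ∀ i j, 0 ≤ d i j) (hdiag : ∀ i, d i i = 0) (hD0 : 0 ≤ D) (P : V → O) (i : V)
    (β : O) :
    nodeCost d r D (update P i β) i + cacheBenefit d r D (update P i β) i
      = nodeCost d r D P i + cacheBenefit d r D P i := by
  simp only [nodeCost_add_cacheBenefit r hd hdiag hD0, holders_update_erase]

theorem cacheBenefit_lt_update_of_nodeCost_lt {d : V → V → ℝ} {r : V → O → ℝ} {D : ℝ}
    (hd : ∀ i j, 0 ≤ d i j) (hdiag : ∀ i, d i i = 0) (hD0 : 0 ≤ D)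
    {P : V → O} {i : V} {β : O} (h : nodeCost d r D (update P i β) i < nodeCost d r D P i) :
    cacheBenefit d r D P i < cacheBenefit d r D (update P i β) i := by
  linarith [nodeCost_update_add_cacheBenefit r hd hdiag hD0 P i β]

noncomputable def benefitPotential (d : V → V → ℝ) (r : V → O → ℝ) (D : ℝ)
    (P : V → O) : ℝ :=
  lexPotential (univ.image fun Q : (V → O) × V => cacheBenefit d r D Q.1 Q.2)
    (cacheBenefit d r D P)

theorem benefitPotential_lt_update {d : V → V → ℝ} {r : V → O → ℝ} {D : ℝ}
    (hd : ∀ i j, 0 ≤ d i j) (hdiag : ∀ i, d i i = 0) (hD0 : 0 ≤ D)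
    (hsym : ∀ i j, d i j = d j i) (hbin : ∀ i α, r i α = 0 ∨ r i α = 1)
    {P : V → O} {i : V} {β : O}
    (h : nodeCost d r D (update P i β) i < nodeCost d r D P i) :
    benefitPotential d r D P < benefitPotential d r D (update P i β) :=
  lexPotential_lt (mem_image_of_mem _ (mem_univ (P, i)))
    (cacheBenefit_lt_update_of_nodeCost_lt hd hdiag hD0 h)
    fun _ hj => cacheBenefit_le_update_or_mover_le hd hD0 hsym hbin P β hj

end Caching

theorem undirected_binary_csr_equilibrium_and_FIP_general
    {V O : Type*} [Fintype V] [Fintype O] [Nonempty O]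
    [DecidableEq V] [DecidableEq O]
    (d : V → V → ℝ) (r : V → O → ℝ) (D : ℝ)
    (hd_nonneg : ∀ i j, 0 ≤ d i j) (hd_diag : ∀ i, d i i = 0)
    (hD : ∀ i j, d i j ≤ D)
    (hsym : ∀ i j, d i j = d j i)
    (hbin : ∀ i α, r i α = 0 ∨ r i α = 1) :
    (∃ P : V → O, ∀ (i : V) (β : O),
      nodeCost d r D P i ≤ nodeCost d r D (Function.update P i β) i) ∧
    ¬ ∃ seq : ℕ → V → O, ∀ t : ℕ, ∃ (i : V) (β : O),
        seq (t + 1) = Function.update (seq t) i β ∧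
        nodeCost d r D (seq (t + 1)) i < nodeCost d r D (seq t) i := by
  have hstep : ∀ (P : V → O) i β,
      nodeCost d r D (update P i β) i < nodeCost d r D P i →
        benefitPotential d r D P < benefitPotential d r D (update P i β) :=
    fun P i β => benefitPotential_lt_update hd_nonneg hd_diag
      ((hd_diag i).symm.trans_le (hD i i)) hsym hbin
  refine ⟨?_, fun ⟨seq, hseq⟩ => ?_⟩
  · obtain ⟨P, -, hmax⟩ := exists_max_image univ (benefitPotential d r D) univ_nonempty
    exact ⟨P, fun i β => not_lt.1 fun h => (hstep P i β h).not_ge (hmax _ (mem_univ _))⟩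
  · have hmono : StrictMono (benefitPotential d r D ∘ seq) :=
      strictMono_nat_of_lt_succ fun t => by
        obtain ⟨i, β, hnext, hlt⟩ := hseq t
        rw [hnext] at hlt
        simpa only [Function.comp, hnext] using hstep _ i β hlt
    obtain ⟨s, t, hst, heq⟩ := Finite.exists_ne_map_eq_of_infinite seq
    exact hst (hmono.injective (congrArg (benefitPotential d r D) heq))

/-- A CSR game with sum utilities on an undirected network (symmetric `d`) with
binary object preferences has a pure Nash equilibrium, and moreover it has the
finite improvement property: there is no infinite sequence of strict unilateral
improvement steps. -/
theorem undirected_binary_csr_equilibrium_and_FIP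
    {V O : Type*} [Fintype V] [Fintype O] [Nonempty V] [Nonempty O]
    [DecidableEq V] [DecidableEq O]
    (d : V → V → ℝ) (r : V → O → ℝ) (D : ℝ)
    (hd_nonneg : ∀ i j, 0 ≤ d i j) (hd_diag : ∀ i, d i i = 0)
    (hr_nonneg : ∀ i α, 0 ≤ r i α) (hD : ∀ i j, d i j ≤ D)
    (hsym : ∀ i j, d i j = d j i)
    (hbin : ∀ i α, r i α = 0 ∨ r i α = 1) :
    (∃ P : V → O, ∀ (i : V) (β : O),
      nodeCost d r D P i ≤ nodeCost d r D (Function.update P i β) i) ∧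
    ¬ ∃ seq : ℕ → V → O, ∀ t : ℕ, ∃ (i : V) (β : O),
        seq (t + 1) = Function.update (seq t) i β ∧
        nodeCost d r D (seq (t + 1)) i < nodeCost d r D (seq t) i :=
  undirected_binary_csr_equilibrium_and_FIP_general d r D hd_nonneg hd_diag hD hsym hbin
end

section
/- In the general CSR framework with unit caches, suppose there are exactly two objects (|𝒪| = 2), the node preference relations are induced by a symmetric cost function d on V (d(i,j) = d(j,i), d(i,i) = 0 ≤ d(i,j)) via: j ⊵_i k iff d(i,j) ≤ d(i,k), every utility preference relation ⪰_i satisfies Monotonicity and Consistency, and there is a server node for each object. Then an equilibrium exists: there is an admissible placement P such that no non-server node i has an object β with P[i ↦ β] ≻_i P. -/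
/-!
With two objects, Monotonicity reduces the preferences of a node `z` to a total preorder on
pairs (object `c` held by `z`, distance to the nearest other holder of the other object `c'`),
decreasing in the distance; `lonePlacement c j c'` represents the pair `(c, d z j)`. Let `n` be
the node nearest to `z`. Then `z` has a home object `h`, which it prefers to hold when `n` holds
the other object `h'`, and a radius `θ z`: the largest distance at which an `h'`-holder still
makes holding `h` at least as good as holding `h'` next to an `h`-holder at `n`. Node `z` is
content exactly when it holds `h'` iff no other node within distance `θ z` holds `h'`.

Such a placement is built greedily, fixing the nodes by increasing radius and flipping a node `a`
to `h'` only when its ball avoids `h'`. The flip can only affect a node `z` with `θ z ≤ θ a`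
whose ball contains `a`; by symmetry of `d`, `z` then lies in the ball of `a`, so `z` does not
hold the flipped object, and the rule at `z` survives.
-/

/-- `j` is a most `i`-preferred holder of `α` in `P_{-i}` (node preferences are
induced by the cost function `d`: `j ⊵_i k` iff `d i j ≤ d i k`). -/
def MostPrefHolder {V O : Type*} (d : V → V → ℝ) (i : V) (α : O) (P : V → O) (j : V) : Prop :=
  j ≠ i ∧ P j = α ∧ ∀ k, k ≠ i → P k = α → d i j ≤ d i k

/-- Strict part of the utility preference relation `upref i`. -/
def UStrict {V O : Type*} (upref : V → (V → O) → (V → O) → Prop)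
    (i : V) (P Q : V → O) : Prop :=
  upref i P Q ∧ ¬ upref i Q P

open Function

section

variable {V O : Type*}

/-- The premise of Monotonicity for node `z`. -/
def Dominates (d : V → V → ℝ) (z : V) (P Q : V → O) : Prop :=
  ∀ α q, Q q = α → ∃ p, P p = α ∧ d z p ≤ d z q

def lonePlacement [DecidableEq V] (c : O) (j : V) (c' : O) : V → O :=
  update (fun _ => c) j c'

def HoldsIffBallAvoids (d : V → V → ℝ) (z : V) (r : ℝ) (c : O) (P : V → O) : Prop :=
  P z = c ↔ ∀ j, j ≠ z → d z j ≤ r → P j ≠ c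

theorem eq_of_ne_of_ne_of_card_eq_two (hO : Nat.card O = 2) {c x y : O} (hx : x ≠ c)
    (hy : y ≠ c) : x = y :=
  ((Nat.card_eq_two_iff' c).1 hO).unique hx hy

theorem exists_threshold {ι : Type*} [Finite ι] (f : ι → ℝ) {t : Set ι} {p : ι → Prop}
    (hne : ∃ j ∈ t, p j) (hdown : ∀ j ∈ t, ∀ k ∈ t, p j → f k ≤ f j → p k) :
    ∃ θ, ∀ k ∈ t, p k ↔ f k ≤ θ := by
  obtain ⟨j, ⟨hjt, hpj⟩, hmax⟩ := Set.exists_max_image {k | k ∈ t ∧ p k} f (Set.toFinite _) hne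
  exact ⟨f j, fun k hk => ⟨fun hpk => hmax k ⟨hk, hpk⟩, hdown j hjt k hk hpj⟩⟩

section Dominates

variable [DecidableEq V] {d : V → V → ℝ} {z : V}

theorem dominates_lonePlacement_of_le (hself : ∀ q, d z z ≤ d z q) {j k : V} (hjz : j ≠ z)
    (hjk : d z j ≤ d z k) (c c' : O) :
    Dominates d z (lonePlacement c j c') (lonePlacement c k c') := by
  rintro α q rfl
  by_cases hqk : q = k
  · subst hqk
    exact ⟨j, by simp [lonePlacement], hjk⟩
  · exact ⟨z, by simp [lonePlacement, hqk, hjz.symm], hself q⟩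

theorem dominates_lonePlacement (hself : ∀ q, d z z ≤ d z q) {P : V → O} {j : V} {c c' : O}
    (hPz : P z = c) (hPj : P j = c') : Dominates d z P (lonePlacement c j c') := by
  rintro α q rfl
  by_cases hqj : q = j
  · subst hqj
    exact ⟨q, by simp [lonePlacement, hPj], le_rfl⟩
  · exact ⟨z, by simp [lonePlacement, hqj, hPz], hself q⟩

theorem lonePlacement_dominates (hself : ∀ q, d z z ≤ d z q) {Q : V → O} {j : V} {c c' : O}
    (hjz : j ≠ z) (hnear : ∀ k, Q k ≠ c → Q k = c' ∧ d z j ≤ d z k) :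
    Dominates d z (lonePlacement c j c') Q := by
  rintro α q rfl
  by_cases hqc : Q q = c
  · exact ⟨z, by simp [lonePlacement, hjz.symm, hqc], hself q⟩
  · obtain ⟨hqc', hjq⟩ := hnear q hqc
    exact ⟨j, by simp [lonePlacement, hqc'], hjq⟩

end Dominates

section BallRule

variable [DecidableEq V] {d : V → V → ℝ}

theorem HoldsIffBallAvoids.update (hsym : ∀ i j, d i j = d j i) (hO : Nat.card O = 2)
    {θ : V → ℝ} {f : V → O} {P : V → O} {a z : V} (hza : z ≠ a) (hθ : θ z ≤ θ a)
    (hPa : P a ≠ f a) (havoid : ∀ j, j ≠ a → d a j ≤ θ a → P j ≠ f a)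
    (hz : HoldsIffBallAvoids d z (θ z) (f z) P) :
    HoldsIffBallAvoids d z (θ z) (f z) (update P a (f a)) := by
  unfold HoldsIffBallAvoids at hz ⊢
  rw [update_of_ne hza]
  by_cases hin : d z a ≤ θ z
  · have hPz : P z ≠ f a := havoid z hza (by rw [hsym]; linarith)
    by_cases hf : f z = f a
    · -- `z` is not flipped, and once `a` is flipped its ball no longer avoids `f z`
      refine iff_of_false (hf ▸ hPz) fun h => h a hza.symm hin ?_
      rw [update_self, hf]
    · -- otherwise `z` and `a` both hold `f z`, contradicting the rule at `z`
      have hPz' : P z = f z := eq_of_ne_of_ne_of_card_eq_two hO hPz hf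
      exact absurd (eq_of_ne_of_ne_of_card_eq_two hO hPa hf)
        (hz.1 hPz' a hza.symm hin)
  · refine hz.trans (forall_congr' fun j => imp_congr_right fun hjz => imp_congr_right fun hj => ?_)
    rw [update_of_ne (by rintro rfl; exact hin hj)]

theorem exists_holdsIffBallAvoids [Fintype V] (hsym : ∀ i j, d i j = d j i)
    (hO : Nat.card O = 2) (θ : V → ℝ) (f : V → O) (free : V → Prop) (P₀ : V → O)
    (hP₀ : ∀ z, free z → P₀ z ≠ f z) :
    ∃ P : V → O, (∀ z, ¬ free z → P z = P₀ z) ∧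
      ∀ z, free z → HoldsIffBallAvoids d z (θ z) (f z) P := by
  suffices ∀ S : Finset V, ∃ P : V → O, (∀ z, (¬ free z ∨ z ∉ S) → P z = P₀ z) ∧
      ∀ z ∈ S, free z → HoldsIffBallAvoids d z (θ z) (f z) P by
    obtain ⟨P, hfix, hrule⟩ := this Finset.univ
    exact ⟨P, fun z hz => hfix z (Or.inl hz), fun z => hrule z (Finset.mem_univ z)⟩
  intro S
  induction S using Finset.induction_on_max_value θ with
  | empty => exact ⟨P₀, fun _ _ => rfl, fun z hz => absurd hz (Finset.notMem_empty z)⟩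
  | insert a S haS hmax ih =>
    obtain ⟨P, hfix, hrule⟩ := ih
    have hfix' : ∀ z, (¬ free z ∨ z ∉ insert a S) → (¬ free z ∨ z ∉ S) :=
      fun z => Or.imp_right fun hz hzS => hz (Finset.mem_insert_of_mem hzS)
    by_cases hkeep : free a → HoldsIffBallAvoids d a (θ a) (f a) P
    · refine ⟨P, fun z hz => hfix z (hfix' z hz), fun z hz => ?_⟩
      rcases Finset.mem_insert.1 hz with rfl | hz
      exacts [hkeep, hrule z hz]
    · obtain ⟨hfree, hbad⟩ := Classical.not_imp.1 hkeep
      have hPa : P a ≠ f a := hfix a (Or.inr haS) ▸ hP₀ a hfree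
      have havoid : ∀ j, j ≠ a → d a j ≤ θ a → P j ≠ f a :=
        by_contra fun h => hbad (iff_of_false hPa h)
      refine ⟨update P a (f a), fun z hz => ?_, fun z hz hzfree => ?_⟩
      · have hza : z ≠ a := by
          rintro rfl
          rcases hz with hz | hz
          exacts [hz hfree, hz (Finset.mem_insert_self z S)]
        rw [update_of_ne hza]
        exact hfix z (hfix' z hz)
      · rcases Finset.mem_insert.1 hz with rfl | hz
        · refine iff_of_true (update_self ..) fun j hjz hj => ?_
          rw [update_of_ne hjz]
          exact havoid j hjz hj
        · exact (hrule z hz hzfree).update hsym hO (ne_of_mem_of_not_mem hz haS) (hmax z hz)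
            hPa havoid

end BallRule

section Equilibrium

variable [DecidableEq V] {d : V → V → ℝ} {pref : (V → O) → (V → O) → Prop} {z : V}

theorem pref_update_of_holdsIffBallAvoids [Finite V] (hO : Nat.card O = 2)
    (hmono : ∀ P Q, Dominates d z P Q → pref P Q) (htotal : ∀ P Q, pref P Q ∨ pref Q P)
    (htrans : ∀ P Q R, pref P Q → pref Q R → pref P R) (hself : ∀ q, d z z ≤ d z q)
    {n : V} (hnz : n ≠ z) (hn : ∀ k, k ≠ z → d z n ≤ d z k) {h h' : O} (hh : h ≠ h')
    {θ : ℝ} (hθn : d z n ≤ θ)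
    (hθ : ∀ j, j ≠ z → (pref (lonePlacement h j h') (lonePlacement h' n h) ↔ d z j ≤ θ))
    {P : V → O} (hP : HoldsIffBallAvoids d z θ h' P) (hother : ∃ k, k ≠ z ∧ P k = P z)
    (β : O) : pref P (update P z β) := by
  by_cases hβ : β = P z
  · rw [hβ, update_eq_self]
    exact (htotal P P).elim id id
  obtain ⟨ja, ⟨hjaz, hja⟩, hja_min⟩ :=
    Set.exists_min_image {k | k ≠ z ∧ P k = P z} (d z) (Set.toFinite _) hother
  have hdev : pref (lonePlacement β ja (P z)) (update P z β) :=
    hmono _ _ <| lonePlacement_dominates hself hjaz fun k hk => by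
      have hkz : k ≠ z := by
        rintro rfl
        exact hk (update_self ..)
      rw [update_of_ne hkz] at hk ⊢
      have hPk : P k = P z := eq_of_ne_of_ne_of_card_eq_two hO hk (Ne.symm hβ)
      exact ⟨hPk, hja_min k ⟨hkz, hPk⟩⟩
  by_cases hPz : P z = h'
  · have hPn : P n = h := eq_of_ne_of_ne_of_card_eq_two hO (hP.1 hPz n hnz hθn) hh
    obtain rfl : β = h := eq_of_ne_of_ne_of_card_eq_two hO (hPz ▸ hβ) hh
    -- the ball of `z` avoids `h'`, so `ja` lies outside it
    have hstay : pref (lonePlacement h' n β) (lonePlacement β ja h') :=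
      (htotal _ _).resolve_right fun hpref =>
        hP.1 hPz ja hjaz ((hθ ja hjaz).1 hpref) (hja.trans hPz)
    rw [hPz] at hdev
    exact htrans _ _ _ (hmono _ _ (dominates_lonePlacement hself hPz hPn))
      (htrans _ _ _ hstay hdev)
  · have hPz' : P z = h := eq_of_ne_of_ne_of_card_eq_two hO hPz hh
    obtain rfl : β = h' := eq_of_ne_of_ne_of_card_eq_two hO (hPz' ▸ hβ) hh.symm
    obtain ⟨j, hjz, hj, hPj⟩ : ∃ j, j ≠ z ∧ d z j ≤ θ ∧ P j = β := by
      by_contra! hnone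
      exact hPz (hP.2 hnone)
    rw [hPz'] at hdev
    exact htrans _ _ _ (hmono _ _ (dominates_lonePlacement hself hPz' hPj)) <|
      htrans _ _ _ ((hθ j hjz).2 hj) <|
      htrans _ _ _ (hmono _ _ (dominates_lonePlacement_of_le hself hnz (hn ja hjaz) β h)) hdev

end Equilibrium

end

theorem two_object_undirected_axiomatic_csr_has_equilibrium_general
    {V O : Type*} [Fintype V] [Fintype O] [DecidableEq V]
    (d : V → V → ℝ)
    (hd_diag : ∀ i, d i i = 0) (hd_nonneg : ∀ i j, 0 ≤ d i j)
    (hsym : ∀ i j, d i j = d j i)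
    (hcard : Fintype.card O = 2)
    (upref : V → (V → O) → (V → O) → Prop)
    (htotal : ∀ i P Q, upref i P Q ∨ upref i Q P)
    (htrans : ∀ i P Q R, upref i P Q → upref i Q R → upref i P R)
    (hmono : ∀ (i : V) (P Q : V → O),
      (∀ (α : O) (q : V), Q q = α → ∃ p, P p = α ∧ d i p ≤ d i q) → upref i P Q)
    (s : O → V) (hs : Function.Injective s) :
    ∃ P : V → O, (∀ α, P (s α) = α) ∧
      ∀ i : V, i ∉ Set.range s → ∀ β : O,
        ¬ UStrict upref i (Function.update P i β) P := by
  have hO : Nat.card O = 2 := Nat.card_eq_fintype_card.trans hcard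
  obtain ⟨a, b, hab, -⟩ := Nat.card_eq_two_iff.1 hO
  have hself : ∀ i q, d i i ≤ d i q := fun i q => hd_diag i ▸ hd_nonneg i q
  have hnear : ∀ z, ∃ n, n ≠ z ∧ ∀ k, k ≠ z → d z n ≤ d z k := fun z => by
    have hother : ∃ k, k ≠ z := ((hs.ne hab).ne_or_ne z).elim (⟨_, ·⟩) (⟨_, ·⟩)
    simpa using Set.exists_min_image {k | k ≠ z} (d z) (Set.toFinite _) hother
  choose n hnz hn using hnear
  have hhome : ∀ z, ∃ h h' : O, h ≠ h' ∧
      upref z (lonePlacement h (n z) h') (lonePlacement h' (n z) h) := fun z =>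
    (htotal z _ _).elim (⟨a, b, hab, ·⟩) (⟨b, a, hab.symm, ·⟩)
  choose home flip hflip hhome using hhome
  have hθ : ∀ z, ∃ θ, ∀ j ∈ {j | j ≠ z}, upref z (lonePlacement (home z) j (flip z))
      (lonePlacement (flip z) (n z) (home z)) ↔ d z j ≤ θ := fun z =>
    exists_threshold (d z) ⟨n z, hnz z, hhome z⟩ fun j _ k hkz hj hkj => htrans z _ _ _
      (hmono z _ _ (dominates_lonePlacement_of_le (hself z) hkz hkj _ _)) hj
  choose θ hθ using hθ
  obtain ⟨P, hPs, hPrule⟩ := exists_holdsIffBallAvoids hsym hO θ flip (· ∉ Set.range s)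
    (Function.extend s id home) fun z hz => by
      rw [Function.extend_apply' _ _ _ fun ⟨α, hα⟩ => hz ⟨α, hα⟩]
      exact hflip z
  have hPs' : ∀ α, P (s α) = α := fun α =>
    (hPs _ (not_not.2 ⟨α, rfl⟩)).trans (hs.extend_apply _ _ _)
  refine ⟨P, hPs', fun i hi β hstrict => hstrict.2 ?_⟩
  exact pref_update_of_holdsIffBallAvoids hO (hmono i) (htotal i) (htrans i) (hself i) (hnz i)
    (hn i) (hflip i) ((hθ i (n i) (hnz i)).1 (hhome i)) (hθ i) (hPrule i hi)
    ⟨s (P i), fun h => hi ⟨_, h⟩, hPs' _⟩ β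

/-- Existence of equilibria in the general axiomatic CSR framework with unit
caches on undirected networks with exactly two objects: if the node preferences
are induced by a symmetric cost function, there are exactly two objects, each
utility preference relation is a total preorder satisfying Monotonicity and
Consistency, and there is a server node for each object, then an admissible
equilibrium placement exists. -/
theorem two_object_undirected_axiomatic_csr_has_equilibrium
    {V O : Type*} [Fintype V] [Fintype O] [Nonempty V] [Nonempty O] [DecidableEq V]
    (d : V → V → ℝ)
    (hd_diag : ∀ i, d i i = 0) (hd_nonneg : ∀ i j, 0 ≤ d i j)
    (hsym : ∀ i j, d i j = d j i)
    (hcard : Fintype.card O = 2)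
    (upref : V → (V → O) → (V → O) → Prop)
    (hrefl : ∀ i P, upref i P P)
    (htotal : ∀ i P Q, upref i P Q ∨ upref i Q P)
    (htrans : ∀ i P Q R, upref i P Q → upref i Q R → upref i P R)
    (hmono : ∀ (i : V) (P Q : V → O),
      (∀ (α : O) (q : V), Q q = α → ∃ p, P p = α ∧ d i p ≤ d i q) → upref i P Q)
    (hcons : ∀ (i : V) (P Q : V → O),
      (∀ α : O, (α = P i ∨ α = Q i) → ∀ p q : V,
        MostPrefHolder d i α P p → MostPrefHolder d i α Q q → d i p = d i q) →
      UStrict upref i P (Function.update P i (Q i)) →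
      upref i (Function.update Q i (P i)) Q)
    (s : O → V) (hs : Function.Injective s) :
    ∃ P : V → O, (∀ α, P (s α) = α) ∧
      ∀ i : V, i ∉ Set.range s → ∀ β : O,
        ¬ UStrict upref i (Function.update P i β) P :=
  two_object_undirected_axiomatic_csr_has_equilibrium_general d hd_diag hd_nonneg hsym hcard upref
    htotal htrans hmono s hs
end

section
/- A finite nonempty strongly connected digraph is stable if and only if it contains a simple directed cycle of even length. -/
private def dchain {V : Type*} (r : V → V → Prop) : ℕ → V → V → Prop
  | 0, u, v => u = v
  | n+1, u, v => ∃ w, r u w ∧ dchain r n w v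

private lemma dchain_snoc {V : Type*} {r : V → V → Prop} :
    ∀ {n : ℕ} {u v w : V}, dchain r n u v → r v w → dchain r (n+1) u w := by
  intro n
  induction n with
  | zero => intro u v w h hr; cases h; exact ⟨w, hr, rfl⟩
  | succ k ih =>
      rintro u v w ⟨z, hz, hc⟩ hr
      exact ⟨z, hz, ih hc hr⟩

private lemma dchain_of_reflTransGen {V : Type*} {r : V → V → Prop} {u v : V}
    (h : Relation.ReflTransGen r u v) : ∃ n, dchain r n u v := by
  induction h with
  | refl => exact ⟨0, rfl⟩
  | tail _ hr ih => obtain ⟨n, hn⟩ := ih; exact ⟨n+1, dchain_snoc hn hr⟩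

private def pcol {V : Type*} (c0 : V → Bool) (d : V → ℕ) (step : V → V) : ℕ → V → Bool
  | 0, v => c0 v
  | k+1, v => if d v = 0 then c0 v else !(pcol c0 d step k (step v))

/-- Key backward lemma: if there is a "core" set `C` with a coloring `c0` such that every
vertex of `C` has an out-neighbor in `C` of different `c0`-color, and every vertex has a
walk into `C`, then the digraph is stable. -/
private lemma stable_of_core {V : Type*} (r : V → V → Prop) (C : V → Prop) (c0 : V → Bool)
    (hC : ∀ v, C v → ∃ w, r v w ∧ C w ∧ c0 w ≠ c0 v)
    (hreach : ∀ v : V, ∃ n, ∃ x, dchain r n v x ∧ C x) :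
    ∃ c : V → Bool, ∀ v, ∃ w, r v w ∧ c w ≠ c v := by
  classical
  set d : V → ℕ := fun v => Nat.find (hreach v) with hd
  have hdspec : ∀ v, ∃ x, dchain r (d v) v x ∧ C x := fun v => Nat.find_spec (hreach v)
  have hd0 : ∀ v, C v → d v = 0 := by
    intro v hv
    have : d v ≤ 0 := Nat.find_le ⟨v, rfl, hv⟩
    omega
  have hdC : ∀ v, d v = 0 → C v := by
    intro v hv
    obtain ⟨x, hx, hxC⟩ := hdspec v
    rw [hv] at hx
    cases hx; exact hxC
  have hstep : ∀ v, 0 < d v → ∃ w, r v w ∧ d w < d v := by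
    intro v hv
    obtain ⟨x, hx, hxC⟩ := hdspec v
    obtain ⟨m, hm⟩ : ∃ m, d v = m + 1 := ⟨d v - 1, by omega⟩
    rw [hm] at hx
    obtain ⟨w, hw, hwc⟩ := hx
    refine ⟨w, hw, ?_⟩
    have : d w ≤ m := Nat.find_le ⟨x, hwc, hxC⟩
    omega
  set step : V → V := fun v => if h : ∃ w, r v w ∧ d w < d v then h.choose else v with hstepdef
  have hstep' : ∀ v, 0 < d v → r v (step v) ∧ d (step v) < d v := by
    intro v hv
    have h := hstep v hv
    simp only [hstepdef, dif_pos h]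
    exact ⟨h.choose_spec.1, h.choose_spec.2⟩
  set col : ℕ → V → Bool := pcol c0 d step with hcol
  -- consistency of the fuelled coloring
  have hL : ∀ k, ∀ v, d v ≤ k → col k v = col (d v) v := by
    intro k
    induction k using Nat.strong_induction_on with
    | _ k ih =>
      intro v hv
      match k with
      | 0 =>
        have : d v = 0 := by omega
        rw [this]
      | j+1 =>
        by_cases h0 : d v = 0
        · rw [h0]
          show (if d v = 0 then c0 v else _) = c0 v
          rw [if_pos h0]
        · obtain ⟨m, hm⟩ : ∃ m, d v = m + 1 := ⟨d v - 1, by omega⟩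
          have hds := (hstep' v (by omega)).2
          have h1 : col (j+1) v = !(col j (step v)) := by
            show (if d v = 0 then _ else _) = _
            rw [if_neg h0]
          have h2 : col (m+1) v = !(col m (step v)) := by
            show (if d v = 0 then _ else _) = _
            rw [if_neg h0]
          rw [hm, h1, h2]
          have hmj : m ≤ j := by omega
          have hdm : d (step v) ≤ m := by omega
          rw [ih j (by omega) (step v) (le_trans hdm hmj),
            ih m (by omega) (step v) hdm]
  refine ⟨fun v => col (d v) v, fun v => ?_⟩
  by_cases h0 : d v = 0
  · obtain ⟨w, hw, hwC, hcw⟩ := hC v (hdC v h0)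
    refine ⟨w, hw, ?_⟩
    show col (d w) w ≠ col (d v) v
    rw [h0, hd0 w hwC]
    exact hcw
  · obtain ⟨m, hm⟩ : ∃ m, d v = m + 1 := ⟨d v - 1, by omega⟩
    obtain ⟨hr, hds⟩ := hstep' v (by omega)
    refine ⟨step v, hr, ?_⟩
    show col (d (step v)) (step v) ≠ col (d v) v
    have h2 : col (m+1) v = !(col m (step v)) := by
      show (if d v = 0 then _ else _) = _
      rw [if_neg h0]
    have hdm : d (step v) ≤ m := by omega
    rw [hm, h2, ← hL m (step v) hdm]
    cases col m (step v) <;> simp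

/-- A finite nonempty strongly connected digraph is stable (admits a 2-coloring
under which every vertex has an out-neighbor of a different color) if and only
if it contains a simple directed cycle of even length. -/
theorem strongly_connected_stable_iff_even_cycle
    {V : Type*} [Fintype V] [Nonempty V] (r : V → V → Prop)
    (hsc : ∀ u v : V, Relation.ReflTransGen r u v) :
    (∃ c : V → Bool, ∀ v : V, ∃ w : V, r v w ∧ c w ≠ c v) ↔
    (∃ n : ℕ, 1 ≤ n ∧ ∃ f : ZMod (2 * n) → V, Function.Injective f ∧
        ∀ t : ZMod (2 * n), r (f t) (f (t + 1))) := by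
  classical
  constructor
  · rintro ⟨c, hc⟩
    choose g hg1 hg2 using hc
    obtain ⟨x0⟩ := ‹Nonempty V›
    -- find a periodic point of g
    obtain ⟨i, j, hij, hijeq⟩ := Finite.exists_ne_map_eq_of_infinite (fun n : ℕ => g^[n] x0)
    wlog hlt : i < j generalizing i j
    · exact this j i hij.symm hijeq.symm (by omega)
    set x : V := g^[i] x0 with hx
    have hper : Function.IsPeriodicPt g (j - i) x := by
      show g^[j-i] x = x
      rw [hx, ← Function.iterate_add_apply]
      have : j - i + i = j := by omega
      rw [this]
      exact hijeq.symm
    have hmem : x ∈ Function.periodicPts g := ⟨j - i, by omega, hper⟩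
    have hmpos : 0 < Function.minimalPeriod g x :=
      Function.minimalPeriod_pos_of_mem_periodicPts hmem
    -- colors alternate along the orbit
    have hflip : ∀ y : V, c (g y) = !(c y) := by
      intro y
      have := hg2 y
      cases hcy : c y <;> cases hgy : c (g y) <;> simp_all
    have heven2 : ∀ k : ℕ, c (g^[2*k] x) = c x := by
      intro k
      induction k with
      | zero => rfl
      | succ k ih =>
          have : 2 * (k+1) = (2*k + 1) + 1 := by ring
          rw [this, Function.iterate_succ_apply', Function.iterate_succ_apply',
            hflip, hflip, Bool.not_not, ih]
    -- m is even
    have hmeven : Function.minimalPeriod g x % 2 = 0 := by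
      by_contra h
      obtain ⟨k, hk⟩ : ∃ k, Function.minimalPeriod g x = 2*k + 1 :=
        ⟨Function.minimalPeriod g x / 2, by omega⟩
      have h1 : c (g^[Function.minimalPeriod g x] x) = c x := by
        rw [Function.iterate_minimalPeriod]
      rw [hk, Function.iterate_succ_apply', hflip, heven2] at h1
      cases c x <;> simp_all
    obtain ⟨n, hn⟩ : ∃ n, Function.minimalPeriod g x = 2 * n :=
      ⟨Function.minimalPeriod g x / 2, by omega⟩
    have hn1 : 1 ≤ n := by omega
    haveI : NeZero (2 * n) := ⟨by omega⟩
    refine ⟨n, hn1, fun t => g^[t.val] x, ?_, ?_⟩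
    · intro t t' h
      have ht : t.val < Function.minimalPeriod g x := by rw [hn]; exact ZMod.val_lt t
      have ht' : t'.val < Function.minimalPeriod g x := by rw [hn]; exact ZMod.val_lt t'
      have := Function.iterate_injOn_Iio_minimalPeriod (f := g) (x := x) ht ht' h
      exact ZMod.val_injective _ this
    · intro t
      have hval : (t + 1).val = (t.val + 1) % (2 * n) := by
        rw [ZMod.val_add]
        congr 1
        haveI : Fact (1 < 2 * n) := ⟨by omega⟩
        rw [ZMod.val_one]
      have heq : ∀ a : ℕ, g^[(a + 1) % (2 * n)] x = g (g^[a] x) := by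
        intro a
        rw [← hn, Function.iterate_mod_minimalPeriod_eq, Function.iterate_succ_apply']
      show r (g^[t.val] x) (g^[(t+1).val] x)
      rw [hval, heq]
      exact hg1 _
  · rintro ⟨n, hn, f, hinj, hf⟩
    haveI : NeZero (2 * n) := ⟨by omega⟩
    set C : V → Prop := fun v => ∃ t, f t = v with hC
    set c0 : V → Bool := fun v =>
      if h : ∃ t, f t = v then decide ((h.choose).val % 2 = 1) else true with hc0
    have hc0f : ∀ s : ZMod (2 * n), c0 (f s) = decide (s.val % 2 = 1) := by
      intro s
      have h : ∃ t, f t = f s := ⟨s, rfl⟩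
      have hs : h.choose = s := hinj h.choose_spec
      simp only [hc0, dif_pos h, hs]
    apply stable_of_core r C c0
    · rintro v ⟨t, rfl⟩
      refine ⟨f (t+1), hf t, ⟨t+1, rfl⟩, ?_⟩
      rw [hc0f, hc0f]
      have hval : (t + 1).val = (t.val + 1) % (2 * n) := by
        rw [ZMod.val_add]
        congr 1
        haveI : Fact (1 < 2 * n) := ⟨by omega⟩
        rw [ZMod.val_one]
      have hpar : (t + 1).val % 2 = (t.val + 1) % 2 := by
        rw [hval, Nat.mod_mod_of_dvd _ ⟨n, rfl⟩]
      rcases Nat.even_or_odd t.val with he | ho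
      · have h1 : t.val % 2 = 0 := Nat.even_iff.mp he
        have h2 : (t+1).val % 2 = 1 := by omega
        simp [h1, h2]
      · have h1 : t.val % 2 = 1 := Nat.odd_iff.mp ho
        have h2 : (t+1).val % 2 = 0 := by omega
        simp [h1, h2]
    · intro v
      obtain ⟨k, hk⟩ := dchain_of_reflTransGen (hsc v (f 0))
      exact ⟨k, f 0, hk, 0, rfl⟩
end

section
/- Let (V, r) be a finite digraph in which every vertex has at least one out-neighbor (for every v there is w with r v w). Call a vertex v terminal if every vertex reachable from v reaches v back (i.e., v lies in a strongly connected component with no outgoing arcs). Then (V, r) is stable if and only if for every terminal vertex v there exists a simple directed cycle of even length all of whose vertices are reachable from v. -/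
open Relation

private lemma forward_main {V : Type*} [Fintype V] (r : V → V → Prop) (c : V → Bool)
    (hc : ∀ v, ∃ w, r v w ∧ c w ≠ c v) (v : V) :
    ∃ n : ℕ, 1 ≤ n ∧ ∃ f : ZMod (2 * n) → V, Function.Injective f ∧
      (∀ t : ZMod (2 * n), r (f t) (f (t + 1))) ∧
      (∀ t : ZMod (2 * n), ReflTransGen r v (f t)) := by
  classical
  have bkey : ∀ a b : Bool, a ≠ b → a = !b := by decide
  obtain ⟨g, hg0, hgr, hgc⟩ : ∃ g : ℕ → V, g 0 = v ∧ (∀ m, r (g m) (g (m + 1))) ∧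
      (∀ m, c (g (m + 1)) = ! c (g m)) := by
    refine ⟨fun m => Nat.rec v (fun _ x => (hc x).choose) m, rfl, fun m => (hc _).choose_spec.1,
      fun m => bkey _ _ (hc _).choose_spec.2⟩
  have hreachg : ∀ m, ReflTransGen r v (g m) := by
    intro m
    induction m with
    | zero => rw [hg0]
    | succ k ih => exact ih.tail (hgr k)
  have hpar : ∀ m, c (g m) = (decide (m % 2 = 1)).xor (c v) := by
    intro m
    induction m with
    | zero => simp [hg0]
    | succ k ih =>
      have hd : decide ((k + 1) % 2 = 1) = !decide (k % 2 = 1) := by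
        rcases Nat.mod_two_eq_zero_or_one k with h | h <;> simp [Nat.add_mod, h]
      rw [hgc k, ih, hd, Bool.not_xor]
  have hparity : ∀ i j, c (g i) = c (g j) → i % 2 = j % 2 := by
    intro i j h
    rw [hpar, hpar] at h
    have h2 : decide (i % 2 = 1) = decide (j % 2 = 1) := by
      cases c v <;> simpa using h
    have h3 : (i % 2 = 1) ↔ (j % 2 = 1) := decide_eq_decide.mp h2
    by_cases hi : i % 2 = 1
    · have hj := h3.mp hi; omega
    · have hj : ¬ (j % 2 = 1) := fun hj => hi (h3.mpr hj)
      omega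
  -- pigeonhole
  obtain ⟨a, b, hab, hgab⟩ := Finite.exists_ne_map_eq_of_infinite g
  have hPj : ∃ j, ∃ i, i < j ∧ g i = g j := by
    rcases lt_or_gt_of_ne hab with h | h
    · exact ⟨b, a, h, hgab⟩
    · exact ⟨a, b, h, hgab.symm⟩
  obtain ⟨j0, ⟨i0, hi0, hgij⟩, hj0min⟩ :
      ∃ j0, (∃ i, i < j0 ∧ g i = g j0) ∧ ∀ m, m < j0 → ¬∃ i, i < m ∧ g i = g m :=
    ⟨Nat.find hPj, Nat.find_spec hPj, fun m hm => Nat.find_min hPj hm⟩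
  have hinj : ∀ a b, i0 ≤ a → a < b → b < j0 → g a ≠ g b := by
    intro a b _ hab hb heq
    exact hj0min b hb ⟨a, hab, heq⟩
  have heven : 2 ∣ (j0 - i0) := by
    have := hparity i0 j0 (by rw [hgij])
    omega
  obtain ⟨n, hn⟩ := heven
  have hn1 : 1 ≤ n := by omega
  haveI : NeZero (2 * n) := ⟨by omega⟩
  refine ⟨n, hn1, fun t => g (i0 + t.val), ?_, ?_, fun t => hreachg _⟩
  · intro t t' h
    have h' : g (i0 + t.val) = g (i0 + t'.val) := h
    by_contra hne
    have ht : t.val < 2 * n := ZMod.val_lt t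
    have ht' : t'.val < 2 * n := ZMod.val_lt t'
    have hvne : t.val ≠ t'.val := fun he => hne (ZMod.val_injective _ he)
    rcases lt_or_gt_of_ne hvne with hlt | hlt
    · exact hinj _ _ (Nat.le_add_right _ _) (by omega) (by omega) h'
    · exact hinj _ _ (Nat.le_add_right _ _) (by omega) (by omega) h'.symm
  · intro t
    show r (g (i0 + t.val)) (g (i0 + (t + 1).val))
    have ht : t.val < 2 * n := ZMod.val_lt t
    have hone : (1 : ZMod (2 * n)).val = 1 := by
      rw [ZMod.val_one_eq_one_mod]
      exact Nat.mod_eq_of_lt (by omega)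
    have hval : (t + 1).val = (t.val + 1) % (2 * n) := by rw [ZMod.val_add, hone]
    by_cases hc2 : t.val + 1 < 2 * n
    · have hv1 : (t + 1).val = t.val + 1 := by rw [hval]; exact Nat.mod_eq_of_lt hc2
      rw [hv1, ← Nat.add_assoc]
      exact hgr _
    · have h1 : (t + 1).val = 0 := by
        rw [hval, show t.val + 1 = 2 * n by omega, Nat.mod_self]
      have h2 : i0 + t.val + 1 = j0 := by omega
      have h3 := hgr (i0 + t.val)
      rw [h2, ← hgij] at h3
      rw [h1]
      simpa using h3

open Relation

private lemma rtg_exists_chain {V : Type*} {r : V → V → Prop} {a b : V}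
    (h : ReflTransGen r a b) :
    ∃ k, ∃ g : ℕ → V, g 0 = a ∧ g k = b ∧ ∀ i, i < k → r (g i) (g (i + 1)) := by
  induction h with
  | refl => exact ⟨0, fun _ => a, rfl, rfl, fun i hi => absurd hi (by omega)⟩
  | @tail x y hax hxy ih =>
    obtain ⟨k, g, hg0, hgk, harc⟩ := ih
    classical
    refine ⟨k + 1, fun i => if i = k + 1 then y else g i, by simp [hg0], by simp, ?_⟩
    intro i hi
    by_cases hik : i = k
    · subst hik
      simp only [if_pos rfl, if_neg (by omega : ¬ i = i + 1)]
      rwa [hgk]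
    · simp only [if_neg (by omega : ¬ i = k + 1), if_neg (by omega : ¬ i + 1 = k + 1)]
      exact harc i (by omega)

private lemma exists_terminal_reachable {V : Type*} [Fintype V] (r : V → V → Prop) (v : V) :
    ∃ w, ReflTransGen r v w ∧ ∀ x, ReflTransGen r w x → ReflTransGen r x w := by
  classical
  set T : Finset V := Finset.univ.filter (fun x => ReflTransGen r v x) with hT
  have hvT : v ∈ T := by simp only [hT, Finset.mem_filter, Finset.mem_univ, true_and]; exact ReflTransGen.refl
  obtain ⟨w, hwT, hmin⟩ := Finset.exists_min_image T
    (fun w => (Finset.univ.filter (fun x => ReflTransGen r w x)).card) ⟨v, hvT⟩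
  have hvw : ReflTransGen r v w := by simpa [hT] using hwT
  refine ⟨w, hvw, fun x hwx => ?_⟩
  by_contra hxw
  have hxT : x ∈ T := by simp [hT]; exact hvw.trans hwx
  have hsub : Finset.univ.filter (fun y => ReflTransGen r x y) ⊂
      Finset.univ.filter (fun y => ReflTransGen r w y) := by
    constructor
    · intro y hy
      simp only [Finset.mem_filter, Finset.mem_univ, true_and] at hy ⊢
      exact hwx.trans hy
    · intro hcon
      have hww : w ∈ Finset.univ.filter (fun y => ReflTransGen r w y) := by
        simp only [Finset.mem_filter, Finset.mem_univ, true_and]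
        exact ReflTransGen.refl
      have := hcon hww
      simp only [Finset.mem_filter, Finset.mem_univ, true_and] at this
      exact hxw this
  exact absurd (hmin x hxT) (by simpa using Finset.card_lt_card hsub)

private lemma back_main {V : Type*} [Fintype V] (r : V → V → Prop)
    (S : Set V) (base : V → Bool)
    (hS : ∀ u ∈ S, ∃ w, r u w ∧ w ∈ S ∧ base w ≠ base u)
    (hreach : ∀ u : V, ∃ x ∈ S, ReflTransGen r u x) :
    ∃ c : V → Bool, ∀ v : V, ∃ w : V, r v w ∧ c w ≠ c v := by
  classical
  have ex : ∀ u : V, ∃ k, ∃ g : ℕ → V, g 0 = u ∧ (∀ i, i < k → r (g i) (g (i + 1))) ∧ g k ∈ S := by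
    intro u
    obtain ⟨x, hxS, hux⟩ := hreach u
    obtain ⟨k, g, hg0, hgk, harc⟩ := rtg_exists_chain hux
    exact ⟨k, g, hg0, harc, hgk ▸ hxS⟩
  obtain ⟨d, hd⟩ : ∃ d : V → ℕ,
      ∀ u, (∃ g : ℕ → V, g 0 = u ∧ (∀ i, i < d u → r (g i) (g (i + 1))) ∧ g (d u) ∈ S) ∧
        (∀ k, (∃ g : ℕ → V, g 0 = u ∧ (∀ i, i < k → r (g i) (g (i + 1))) ∧ g k ∈ S) → d u ≤ k) :=
    ⟨fun u => Nat.find (ex u), fun u => ⟨Nat.find_spec (ex u), fun k hk => Nat.find_le hk⟩⟩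
  have hd0 : ∀ u ∈ S, d u = 0 := by
    intro u hu
    have := (hd u).2 0 ⟨fun _ => u, rfl, fun i hi => absurd hi (by omega), hu⟩
    omega
  have hd0' : ∀ u, d u = 0 → u ∈ S := by
    intro u h0
    obtain ⟨g, hg0, _, hgS⟩ := (hd u).1
    rw [h0] at hgS
    rwa [hg0] at hgS
  have hstep : ∀ u, u ∉ S → ∃ w, r u w ∧ d w < d u := by
    intro u hu
    obtain ⟨g, hg0, harc, hgS⟩ := (hd u).1
    have hpos : d u ≠ 0 := fun h0 => hu (hd0' u h0)
    refine ⟨g 1, hg0 ▸ harc 0 (by omega), ?_⟩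
    have : d (g 1) ≤ d u - 1 := by
      refine (hd (g 1)).2 (d u - 1) ⟨fun i => g (i + 1), rfl, fun i hi => harc (i + 1) (by omega),
        ?_⟩
      show g (d u - 1 + 1) ∈ S
      rw [show d u - 1 + 1 = d u by omega]
      exact hgS
    omega
  obtain ⟨next, hnext⟩ : ∃ next : V → V, ∀ u, u ∉ S → r u (next u) ∧ d (next u) < d u := by
    refine ⟨fun u => if h : ∃ w, r u w ∧ d w < d u then h.choose else u, fun u hu => ?_⟩
    have h := hstep u hu
    simp only [dif_pos h]
    exact h.choose_spec
  obtain ⟨A, hA0, hAS⟩ : ∃ A : ℕ → V → Bool, (∀ u, A 0 u = base u) ∧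
      (∀ k u, A (k + 1) u = if u ∈ S then base u else ! A k (next u)) :=
    ⟨fun k => Nat.rec base (fun _ ih u => if u ∈ S then base u else ! ih (next u)) k,
      fun _ => rfl, fun _ _ => rfl⟩
  have hstable : ∀ k j u, d u ≤ j → j ≤ k → A j u = A (d u) u := by
    intro k
    induction k with
    | zero =>
      intro j u hdj hjk
      have : j = 0 := by omega
      subst this
      have : d u = 0 := by omega
      rw [this]
    | succ k ih =>
      intro j u hdj hjk
      match j, hdj with
      | 0, hdj =>
        have : d u = 0 := by omega
        rw [this]
      | j' + 1, hdj =>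
        by_cases hu : u ∈ S
        · rw [hd0 u hu, hA0, hAS, if_pos hu]
        · have hdpos : d u ≠ 0 := fun h0 => hu (hd0' u h0)
          obtain ⟨m, hm⟩ : ∃ m, d u = m + 1 := ⟨d u - 1, by omega⟩
          have hnlt := (hnext u hu).2
          rw [hAS, if_neg hu, hm, hAS, if_neg hu]
          have h1 : A j' (next u) = A (d (next u)) (next u) := ih j' (next u) (by omega) (by omega)
          have h2 : A m (next u) = A (d (next u)) (next u) := ih m (next u) (by omega) (by omega)
          rw [h1, h2]
  refine ⟨fun u => A (d u) u, fun u => ?_⟩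
  by_cases hu : u ∈ S
  · obtain ⟨w, hrw, hwS, hbw⟩ := hS u hu
    refine ⟨w, hrw, ?_⟩
    show A (d w) w ≠ A (d u) u
    rw [hd0 u hu, hd0 w hwS, hA0, hA0]
    exact hbw
  · refine ⟨next u, (hnext u hu).1, ?_⟩
    have hdpos : d u ≠ 0 := fun h0 => hu (hd0' u h0)
    obtain ⟨m, hm⟩ : ∃ m, d u = m + 1 := ⟨d u - 1, by omega⟩
    have hnlt := (hnext u hu).2
    show A (d (next u)) (next u) ≠ A (d u) u
    rw [hm, hAS, if_neg hu]
    have : A m (next u) = A (d (next u)) (next u) := hstable m m (next u) (by omega) le_rfl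
    rw [this]
    exact (Bool.not_ne_self _).symm

/-- A finite digraph in which every vertex has an out-neighbor is stable iff
for every terminal vertex `v` (a vertex whose strongly connected component has
no outgoing arcs) there is a simple directed even cycle all of whose vertices
are reachable from `v`. -/
theorem stable_iff_terminal_components_have_even_cycles
    {V : Type*} [Fintype V] (r : V → V → Prop)
    (hout : ∀ v : V, ∃ w : V, r v w) :
    (∃ c : V → Bool, ∀ v : V, ∃ w : V, r v w ∧ c w ≠ c v) ↔
    (∀ v : V, (∀ w : V, Relation.ReflTransGen r v w → Relation.ReflTransGen r w v) →
      ∃ n : ℕ, 1 ≤ n ∧ ∃ f : ZMod (2 * n) → V, Function.Injective f ∧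
        (∀ t : ZMod (2 * n), r (f t) (f (t + 1))) ∧
        (∀ t : ZMod (2 * n), Relation.ReflTransGen r v (f t))) := by
  constructor
  · rintro ⟨c, hc⟩ v _
    exact forward_main r c hc v
  · intro H
    classical
    obtain ⟨rep, hrep1, hrep2⟩ : ∃ rep : V → V,
        (∀ v, ReflTransGen r (rep v) v ∧ ReflTransGen r v (rep v)) ∧
        (∀ a b, ReflTransGen r a b → ReflTransGen r b a → rep a = rep b) := by
      let s : Setoid V := ⟨fun a b => ReflTransGen r a b ∧ ReflTransGen r b a,
        ⟨fun a => ⟨.refl, .refl⟩, fun h => ⟨h.2, h.1⟩,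
          fun h1 h2 => ⟨h1.1.trans h2.1, h2.2.trans h1.2⟩⟩⟩
      exact ⟨fun v => (Quotient.mk s v).out, fun v => Quotient.mk_out v,
        fun a b h1 h2 => congrArg Quotient.out (Quotient.sound (⟨h1, h2⟩ : s.r a b))⟩
    have H' : ∀ u : {u : V // (∀ w, ReflTransGen r u w → ReflTransGen r w u) ∧ rep u = u},
        ∃ n : ℕ, 1 ≤ n ∧ ∃ f : ZMod (2 * n) → V, Function.Injective f ∧
          (∀ t : ZMod (2 * n), r (f t) (f (t + 1))) ∧
          (∀ t : ZMod (2 * n), ReflTransGen r u.1 (f t)) := fun u => H u.1 u.2.1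
    choose n hn f hinj harc hrch using H'
    let U := {u : V // (∀ w, ReflTransGen r u w → ReflTransGen r w u) ∧ rep u = u}
    have hclass : ∀ (u : U) t, ReflTransGen r (f u t) u.1 ∧ ReflTransGen r u.1 (f u t) :=
      fun u t => ⟨u.2.1 _ (hrch u t), hrch u t⟩
    have huniq : ∀ (u u' : U) t t', f u t = f u' t' → u = u' := by
      intro u u' t t' h
      have h1 := hclass u t
      have h2 := hclass u' t'
      rw [h] at h1
      exact Subtype.ext ((u.2.2.symm.trans
        (hrep2 u.1 u'.1 (h1.2.trans h2.1) (h2.2.trans h1.1))).trans u'.2.2)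
    have pcdvd : ∀ u : U, (2 : ℕ) ∣ 2 * n u := fun u => dvd_mul_right 2 (n u)
    refine back_main r {x | ∃ u : U, ∃ t, f u t = x}
      (fun x => decide (∃ u : U, ∃ t, f u t = x ∧
        ZMod.castHom (pcdvd u) (ZMod 2) t = 1)) ?_ ?_
    · rintro x ⟨u, t, rfl⟩
      refine ⟨f u (t + 1), harc u t, ⟨u, t + 1, rfl⟩, ?_⟩
      have hbase : ∀ t0 : ZMod (2 * n u),
          decide (∃ u' : U, ∃ t', f u' t' = f u t0 ∧
            ZMod.castHom (pcdvd u') (ZMod 2) t' = 1)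
          = decide (ZMod.castHom (pcdvd u) (ZMod 2) t0 = 1) := by
        intro t0
        apply decide_eq_decide.mpr
        constructor
        · rintro ⟨u', t', hft, hpc⟩
          obtain rfl := huniq u' u t' t0 hft
          obtain rfl := hinj u' hft
          exact hpc
        · intro h
          exact ⟨u, t0, rfl, h⟩
      show decide _ ≠ decide _
      rw [hbase, hbase]
      have hmap : ZMod.castHom (pcdvd u) (ZMod 2) (t + 1)
          = ZMod.castHom (pcdvd u) (ZMod 2) t + 1 := by rw [map_add, map_one]
      have key : ∀ a : ZMod 2, (decide (a + 1 = 1) ≠ decide (a = 1)) := by decide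
      rw [hmap]
      exact key _
    · intro u
      obtain ⟨w, huw, hterm⟩ := exists_terminal_reachable r u
      have hEw := hrep1 w
      have hTerm0 : ∀ y, ReflTransGen r (rep w) y → ReflTransGen r y (rep w) :=
        fun y hy => (hterm y (hEw.2.trans hy)).trans hEw.2
      have hfix : rep (rep w) = rep w := hrep2 _ _ hEw.1 hEw.2
      refine ⟨f ⟨rep w, hTerm0, hfix⟩ 0, ⟨⟨rep w, hTerm0, hfix⟩, 0, rfl⟩, ?_⟩
      exact (huw.trans hEw.2).trans (hrch ⟨rep w, hTerm0, hfix⟩ 0)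
end

section
/- Any symmetric cost function yields an acyclic node preference collection: if V is a finite set and d : V × V → ℝ satisfies d(i,j) = d(j,i) for all i,j, then there is no integer k ≥ 3 and sequence of nodes i_0, i_1, …, i_{k−1} in V such that d(i_j, i_{(j−1) mod k}) < d(i_j, i_{(j+1) mod k}) for every 0 ≤ j < k. -/
/-- Any symmetric cost function yields an acyclic node preference collection:
there is no cyclic sequence `i_0, …, i_{k−1}` (k ≥ 3) such that each `i_j`
strictly prefers its predecessor to its successor, where `i` strictly prefers
`j` to `k` iff `d(i,j) < d(i,k)`. -/
theorem symmetric_cost_preferences_acyclic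
    {V : Type*} [Fintype V] (d : V → V → ℝ)
    (hsym : ∀ i j, d i j = d j i) :
    ¬ ∃ k : ℕ, 3 ≤ k ∧ ∃ i : ZMod k → V,
        ∀ j : ZMod k, d (i j) (i (j - 1)) < d (i j) (i (j + 1)) := by
  rintro ⟨k, hk, i, h⟩
  haveI : NeZero k := ⟨by omega⟩
  have hsum : ∑ j : ZMod k, d (i j) (i (j - 1)) = ∑ j : ZMod k, d (i j) (i (j + 1)) := by
    rw [← Equiv.sum_comp (Equiv.addRight (1 : ZMod k)) (fun j => d (i j) (i (j - 1)))]
    apply Finset.sum_congr rfl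
    intro j _
    simp [hsym (i (j + 1)) (i j)]
  have hlt := Finset.sum_lt_sum_of_nonempty Finset.univ_nonempty (fun j _ => h j)
  rw [hsum] at hlt
  exact lt_irrefl _ hlt
end

section
/- For any acyclic node preference collection there is a consistent symmetric cost function: if V is a finite set and for each i ∈ V, ⊵_i is a total preorder on V with i ⊵_i j for all j (strict part denoted ≻_i), and the collection is acyclic (there is no integer k ≥ 3 and sequence i_0, …, i_{k−1} with i_{(j−1) mod k} ≻_{i_j} i_{(j+1) mod k} for all 0 ≤ j < k), then there exists a symmetric function d : V × V → ℤ (d(i,j) = d(j,i)) such that for all i, j, k: j ≻_i k implies d(i,j) < d(i,k). -/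
namespace AcyclicPrefAux

variable {V : Type*}

/-- The strict preference relation at node `i`. -/
def sP (pref : V → V → V → Prop) (i j k : V) : Prop := pref i j k ∧ ¬ pref i k j

/-- The induced relation on unordered pairs. -/
def pR (pref : V → V → V → Prop) (e f : Sym2 V) : Prop :=
  ∃ i j k, sP pref i j k ∧ e = s(i, j) ∧ f = s(i, k)

/-- A cyclic chain of pairwise comparisons of length `n`. -/
def IsCyc (pref : V → V → V → Prop) (n : ℕ) : Prop :=
  1 ≤ n ∧ ∃ p a b : ℕ → V,
    (∀ t < n, sP pref (p t) (a t) (b t)) ∧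
    (∀ t < n, s(p ((t + 1) % n), a ((t + 1) % n)) = s(p t, b t))

lemma sP_trans {pref : V → V → V → Prop}
    (htrans : ∀ i j k l, pref i j k → pref i k l → pref i j l)
    {i j k l : V} (h1 : sP pref i j k) (h2 : sP pref i k l) : sP pref i j l :=
  ⟨htrans i j k l h1.1 h2.1, fun hl => h1.2 (htrans i k l j h2.1 hl)⟩

lemma chain_of_transGen {pref : V → V → V → Prop} {e f : Sym2 V}
    (h : Relation.TransGen (pR pref) e f) :
    ∃ n, 1 ≤ n ∧ ∃ p a b : ℕ → V,
      (∀ t < n, sP pref (p t) (a t) (b t)) ∧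
      (∀ t, t + 1 < n → s(p (t + 1), a (t + 1)) = s(p t, b t)) ∧
      s(p 0, a 0) = e ∧ s(p (n - 1), b (n - 1)) = f := by
  induction h with
  | single hr =>
      obtain ⟨i, j, k, hs, he, hf⟩ := hr
      exact ⟨1, le_refl 1, (fun _ => i), (fun _ => j), (fun _ => k),
        fun t _ => hs, fun t ht => absurd ht (by omega), he.symm, hf.symm⟩
  | tail _ hr ih =>
      obtain ⟨n, hn, p, a, b, hs, hl, h0, h1⟩ := ih
      obtain ⟨i, j, k, hstep, hf, hg⟩ := hr
      refine ⟨n + 1, by omega,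
        (fun t => if t < n then p t else i),
        (fun t => if t < n then a t else j),
        (fun t => if t < n then b t else k), ?_, ?_, ?_, ?_⟩
      · intro t ht
        by_cases h : t < n
        · simpa [h] using hs t h
        · simpa [h] using hstep
      · intro t ht
        have htn : t < n := by omega
        by_cases h : t + 1 < n
        · simp only [if_pos h, if_pos htn]
          exact hl t h
        · have he : t = n - 1 := by omega
          simp only [if_neg h, if_pos htn]
          rw [← hf, ← h1, he]
      · have : (0 : ℕ) < n := by omega
        simpa [this] using h0
      · have : ¬ (n + 1 - 1 < n) := by omega
        simp only [Nat.add_sub_cancel] at *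
        simp [this, ← hg]

lemma no_cyc {pref : V → V → V → Prop}
    (htotal : ∀ i j k, pref i j k ∨ pref i k j)
    (htrans : ∀ i j k l, pref i j k → pref i k l → pref i j l)
    (hself : ∀ i j, pref i i j)
    (hacyclic : ¬ ∃ k : ℕ, 3 ≤ k ∧ ∃ i : ZMod k → V,
        ∀ j : ZMod k, pref (i j) (i (j - 1)) (i (j + 1)) ∧
          ¬ pref (i j) (i (j + 1)) (i (j - 1))) :
    ∀ n, ¬ IsCyc pref n := by
  intro n₀ hcyc₀
  have H : ∃ m, IsCyc pref m := ⟨n₀, hcyc₀⟩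
  classical
  obtain ⟨n, hmin, hspec⟩ : ∃ n, (∀ m < n, ¬ IsCyc pref m) ∧ IsCyc pref n :=
    ⟨Nat.find H, fun m hm => Nat.find_min H hm, Nat.find_spec H⟩
  obtain ⟨hn1, p, a, b, hstrict, hlink⟩ := hspec
  have hnpos : 0 < n := hn1
  -- basic facts
  have hbp : ∀ t < n, b t ≠ p t := by
    intro t ht hb
    exact (hstrict t ht).2 (hb ▸ hself (p t) (a t))
  have hab : ∀ t < n, a t ≠ b t := by
    intro t ht hEq
    have := (hstrict t ht).2
    exact this (hEq ▸ (hstrict t ht).1)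
  by_cases hA : ∃ t, t < n ∧ p ((t + 1) % n) = p t
  · -- contraction case
    obtain ⟨t, ht, hpp⟩ := hA
    set t' := (t + 1) % n with ht'_def
    have ht' : t' < n := Nat.mod_lt _ hnpos
    have hat' : a t' = b t := by
      have := hlink t ht
      rw [hpp, Sym2.eq_iff] at this
      rcases this with ⟨_, h2⟩ | ⟨h1, _⟩
      · exact h2
      · exact absurd h1.symm (hbp t ht)
    have hmerge : sP pref (p t) (a t) (b t') := by
      refine sP_trans htrans (hstrict t ht) ?_
      have := hstrict t' ht'
      rwa [hpp, hat'] at this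
    rcases eq_or_lt_of_le hn1 with hone | hn2
    · -- n = 1 : direct contradiction
      have hn1' : n = 1 := hone.symm
      have : t' = t := by omega
      exact hab t ht (this ▸ hat')
    · -- n ≥ 2 : build a cycle of length n - 1
      have hcyc' : IsCyc pref (n - 1) := by
        refine ⟨by omega, (fun u => p ((t + 2 + u) % n)), (fun u => a ((t + 2 + u) % n)),
          (fun u => if u = n - 2 then b t' else b ((t + 2 + u) % n)), ?_, ?_⟩
        · intro u hu
          by_cases hu2 : u = n - 2
          · have ho : (t + 2 + u) % n = t := by
              subst hu2
              have : t + 2 + (n - 2) = t + n := by omega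
              rw [this, Nat.add_mod_right, Nat.mod_eq_of_lt ht]
            simp only [if_pos hu2, ho]
            exact hmerge
          · simp only [if_neg hu2]
            exact hstrict _ (Nat.mod_lt _ hnpos)
        · intro u hu
          by_cases hu2 : u = n - 2
          · -- wrap-around link
            subst hu2
            have hup : (n - 2 + 1) % (n - 1) = 0 := by
              have : n - 2 + 1 = n - 1 := by omega
              rw [this, Nat.mod_self]
            have ho : (t + 2 + 0) % n = (t' + 1) % n := by
              rw [ht'_def, Nat.mod_add_mod]
            have ho2 : (t + 2 + (n - 2)) % n = t := by
              have : t + 2 + (n - 2) = t + n := by omega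
              rw [this, Nat.add_mod_right, Nat.mod_eq_of_lt ht]
            simp only [if_pos rfl, hup, ho, ho2]
            have := hlink t' ht'
            rwa [hpp] at this
          · have hup : (u + 1) % (n - 1) = u + 1 := Nat.mod_eq_of_lt (by omega)
            have ho : (t + 2 + (u + 1)) % n = ((t + 2 + u) % n + 1) % n := by
              rw [Nat.mod_add_mod, ← Nat.add_assoc]
            simp only [if_neg hu2, hup, ho]
            exact hlink _ (Nat.mod_lt _ hnpos)
      exact hmin (n - 1) (by omega) hcyc'
  · -- all consecutive pivots distinct: extract a genuine node cycle
    push_neg at hA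
    have hkey : ∀ t < n, b t = p ((t + 1) % n) ∧ a ((t + 1) % n) = p t := by
      intro t ht
      have := hlink t ht
      rw [Sym2.eq_iff] at this
      rcases this with ⟨h1, _⟩ | ⟨h1, h2⟩
      · exact absurd h1 (hA t ht)
      · exact ⟨h1.symm, h2⟩
    have hn3 : 3 ≤ n := by
      by_contra hlt
      interval_cases n
      · have := hA 0 hnpos
        simp at this
      · have h0 := hkey 0 (by norm_num)
        have h1 := hkey 1 (by norm_num)
        have ha0 : a 0 = p 1 := by simpa using h1.2
        have hb0 : b 0 = p 1 := by simpa using h0.1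
        exact hab 0 (by norm_num) (ha0.trans hb0.symm)
    haveI : NeZero n := ⟨by omega⟩
    haveI : Fact (1 < n) := ⟨by omega⟩
    refine hacyclic ⟨n, hn3, (fun z => p z.val), ?_⟩
    intro j
    have hjv : j.val < n := ZMod.val_lt j
    have hvp1 : (j + 1).val = (j.val + 1) % n := by
      rw [ZMod.val_add, ZMod.val_one]
    have hvneg : (-1 : ZMod n).val = n - 1 := by
      obtain ⟨m, rfl⟩ : ∃ m, n = m + 1 := ⟨n - 1, by omega⟩
      exact ZMod.val_neg_one m
    have hvm1 : (j - 1).val = (j.val + (n - 1)) % n := by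
      rw [sub_eq_add_neg, ZMod.val_add, hvneg]
    set t := j.val with ht_def
    have hb : b t = p ((t + 1) % n) := (hkey t hjv).1
    have hs : (t + (n - 1)) % n < n := Nat.mod_lt _ hnpos
    have ha : a t = p ((t + (n - 1)) % n) := by
      have hstep : ((t + (n - 1)) % n + 1) % n = t := by
        rw [Nat.mod_add_mod]
        have : t + (n - 1) + 1 = t + n := by omega
        rw [this, Nat.add_mod_right, Nat.mod_eq_of_lt hjv]
      have := (hkey _ hs).2
      rwa [hstep] at this
    have hst := hstrict t hjv
    rw [ha, hb] at hst
    show sP pref (p (ZMod.val j)) (p (ZMod.val (j - 1))) (p (ZMod.val (j + 1)))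
    rw [hvp1, hvm1]
    exact hst

end AcyclicPrefAux

/-- For any acyclic collection of node preference relations (total preorders
`⊵_i` with `i` most preferred by itself) there exists a consistent symmetric
integer cost function: `j ≻_i k` implies `d(i,j) < d(i,k)`. -/
theorem acyclic_preferences_have_symmetric_costs
    {V : Type*} [Fintype V]
    (pref : V → V → V → Prop)
    (htotal : ∀ i j k, pref i j k ∨ pref i k j)
    (htrans : ∀ i j k l, pref i j k → pref i k l → pref i j l)
    (hself : ∀ i j, pref i i j)
    (hacyclic : ¬ ∃ k : ℕ, 3 ≤ k ∧ ∃ i : ZMod k → V,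
        ∀ j : ZMod k, pref (i j) (i (j - 1)) (i (j + 1)) ∧
          ¬ pref (i j) (i (j + 1)) (i (j - 1))) :
    ∃ d : V → V → ℤ, (∀ i j, d i j = d j i) ∧
      ∀ i j k : V, (pref i j k ∧ ¬ pref i k j) → d i j < d i k := by
  classical
  open AcyclicPrefAux in
  -- irreflexivity of the transitive closure of the pair relation
  have hirr : ∀ e : Sym2 V, ¬ Relation.TransGen (pR pref) e e := by
    intro e he
    obtain ⟨n, hn, p, a, b, hs, hl, h0, h1⟩ := chain_of_transGen he
    refine no_cyc htotal htrans hself hacyclic n ⟨hn, p, a, b, hs, ?_⟩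
    intro t ht
    by_cases h : t + 1 < n
    · rw [Nat.mod_eq_of_lt h]
      exact hl t h
    · have hte : t = n - 1 := by omega
      have : (t + 1) % n = 0 := by
        have : t + 1 = n := by omega
        rw [this, Nat.mod_self]
      rw [this, h0, ← h1, hte]
  let D : Sym2 V → ℤ := fun e =>
    ((Finset.univ.filter (fun f => Relation.TransGen (pR pref) f e)).card : ℤ)
  have hD : ∀ e f : Sym2 V, pR pref e f → D e < D f := by
    intro e f hr
    have hsub : Finset.univ.filter (fun g => Relation.TransGen (pR pref) g e) ⊂
        Finset.univ.filter (fun g => Relation.TransGen (pR pref) g f) := by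
      constructor
      · intro g hg
        simp only [Finset.mem_filter, Finset.mem_univ, true_and] at hg ⊢
        exact hg.tail hr
      · intro hsub'
        have he : e ∈ Finset.univ.filter (fun g => Relation.TransGen (pR pref) g f) := by
          simp only [Finset.mem_filter, Finset.mem_univ, true_and]
          exact Relation.TransGen.single hr
        have := hsub' he
        simp only [Finset.mem_filter, Finset.mem_univ, true_and] at this
        exact hirr e this
    show ((Finset.univ.filter (fun g => Relation.TransGen (pR pref) g e)).card : ℤ) <
      ((Finset.univ.filter (fun g => Relation.TransGen (pR pref) g f)).card : ℤ)
    exact_mod_cast Finset.card_lt_card hsub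
  refine ⟨fun i j => D s(i, j), fun i j => ?_, ?_⟩
  · show D s(i, j) = D s(j, i)
    rw [Sym2.eq_swap]
  · intro i j k hjk
    exact hD s(i, j) s(i, k) ⟨i, j, k, hjk, rfl, rfl⟩
end

section
/- Best responses in CSR games with sum utilities: fix a CSR game with sum utilities, a placement P, and a node i. For each object γ let g_i(γ) = min(D, min{ d(i,j) : j ≠ i, P(j) = γ }) be the cost of accessing γ from the nearest node other than i that holds it (or from the server). Then the placement P[i ↦ α] satisfies cost_i(P[i ↦ α]) ≤ cost_i(P[i ↦ β]) for every object β if and only if α maximizes r(i,γ)·g_i(γ) over all objects γ. In particular, storing an object α maximizing r(i,γ)·g_i(γ) is a best response of node i to the placement of the other nodes. -/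
open Finset

/-- `g_i(γ)`: cost of accessing `γ` from the nearest node other than `i`
holding it (or from the server). -/
noncomputable def awayCost {V O : Type*} [Fintype V] [DecidableEq V] [DecidableEq O]
    (d : V → V → ℝ) (D : ℝ) (P : V → O) (i : V) (γ : O) : ℝ :=
  haveI := Classical.decEq ℝ
  (insert D ((Finset.univ.filter (fun j => j ≠ i ∧ P j = γ)).image (d i))).min'
    (Finset.insert_nonempty _ _)

/-- Best responses in CSR games with sum utilities: for node `i` and placement `P`,
storing `α` is at least as good as storing any other single object iff `α`
maximizes `r(i,γ)·g_i(γ)` over all objects `γ`. -/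
theorem csr_sum_best_response_iff
    {V O : Type*} [Fintype V] [Fintype O] [Nonempty V] [Nonempty O]
    [DecidableEq V] [DecidableEq O]
    (d : V → V → ℝ) (r : V → O → ℝ) (D : ℝ)
    (hd_nonneg : ∀ i j, 0 ≤ d i j) (hd_diag : ∀ i, d i i = 0)
    (hr_nonneg : ∀ i α, 0 ≤ r i α) (hD : ∀ i j, d i j ≤ D)
    (P : V → O) (i : V) (α : O) :
    (∀ β : O, nodeCost d r D (Function.update P i α) i ≤
              nodeCost d r D (Function.update P i β) i) ↔
    (∀ γ : O, r i γ * awayCost d D P i γ ≤ r i α * awayCost d D P i α) := by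
  classical
  have hD0 : 0 ≤ D := (hd_diag i) ▸ hD i i
  -- access cost of stored object is 0
  have hself : ∀ β : O, accessCost d D (Function.update P i β) i β = 0 := by
    intro β
    unfold accessCost
    apply le_antisymm
    · have hmem : d i i ∈
          insert D ((Finset.univ.filter
            (fun j => Function.update P i β j = β)).image (d i)) := by
        refine Finset.mem_insert_of_mem (Finset.mem_image_of_mem _ ?_)
        simp
      rw [← hd_diag i]
      exact Finset.min'_le _ _ hmem
    · apply Finset.le_min'
      intro y hy
      rcases Finset.mem_insert.mp hy with h | h
      · exact h ▸ hD0
      · obtain ⟨j, -, rfl⟩ := Finset.mem_image.mp h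
        exact hd_nonneg i j
  -- access cost of other objects equals the away cost
  have hother : ∀ β γ : O, γ ≠ β →
      accessCost d D (Function.update P i β) i γ = awayCost d D P i γ := by
    intro β γ hne
    unfold accessCost awayCost
    have hset : (Finset.univ.filter (fun j => Function.update P i β j = γ))
        = (Finset.univ.filter (fun j => j ≠ i ∧ P j = γ)) := by
      ext j
      simp only [Finset.mem_filter, Finset.mem_univ, true_and,
        Function.update_apply]
      by_cases h : j = i
      · simp [h, hne.symm]
      · simp [h]
    simp only [hset]
  have hcost : ∀ β : O, nodeCost d r D (Function.update P i β) i
      = (∑ γ : O, r i γ * awayCost d D P i γ) - r i β * awayCost d D P i β := by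
    intro β
    unfold nodeCost
    have : ∀ γ : O, r i γ * accessCost d D (Function.update P i β) i γ
        = r i γ * awayCost d D P i γ
          - (if γ = β then r i β * awayCost d D P i β else 0) := by
      intro γ
      by_cases h : γ = β
      · subst h; rw [hself γ]; simp
      · rw [hother β γ h]; simp [h]
    rw [Finset.sum_congr rfl (fun γ _ => this γ), Finset.sum_sub_distrib,
      Finset.sum_ite_eq' Finset.univ β (fun _ => r i β * awayCost d D P i β)]
    simp
  constructor
  · intro h γ
    have := h γ
    rw [hcost α, hcost γ] at this
    linarith
  · intro h β
    have := h β
    rw [hcost α, hcost β]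
    linarith
end

section
/- In the general CSR framework with unit caches over a hierarchical network with servers (as in the context), fix a non-server node i and an admissible placement P. (1) If j is a most i-preferred holder of α in P_{-i}, k is a most i-preferred holder of β in P_{-i}, and the placement with i storing β is strictly ⪰_i-preferred to the placement with i storing α (both completing P_{-i}), then (β, d(i,k)) ⊳_i (α, d(i,j)). (2) If α is an object maximizing the pair (γ, d(i, σ_i(P_{-i}, γ))) over all objects γ with respect to the total preorder induced by ⊳_i (where σ_i(P_{-i}, γ) is a most i-preferred holder of γ in P_{-i}), then storing α is a best response of i to P_{-i}: for every object β, the placement with i storing β is not strictly ⪰_i-preferred to the placement with i storing α. -/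
/-- The pair preference relation `⊳_i` on `𝒪 × {d(i,j) : j ≠ i}`:
`(α, ℓ) ⊳_i (α, ℓ')` whenever `ℓ > ℓ'`, and for `α ≠ β`,
`(α, d(i,j)) ⊳_i (β, d(i,k))` whenever there is an admissible placement of
`V∖{i}` in which `j` is a most `i`-preferred holder of `α` and `k` a most
`i`-preferred holder of `β`, and `i` strictly prefers storing `α` to storing `β`. -/
def PairLt {V O : Type*} [DecidableEq V] (d : V → V → ℝ)
    (upref : V → (V → O) → (V → O) → Prop) (s : O → V) (i : V) :
    O × ℝ → O × ℝ → Prop := fun x y =>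
  (x.1 = y.1 ∧ x.2 > y.2) ∨
  (x.1 ≠ y.1 ∧ ∃ j k : V, j ≠ i ∧ k ≠ i ∧ d i j = x.2 ∧ d i k = y.2 ∧
    ∃ P : V → O, (∀ γ, P (s γ) = γ) ∧
      MostPrefHolder d i x.1 P j ∧ MostPrefHolder d i y.1 P k ∧
      UStrict upref i (Function.update P i x.1) (Function.update P i y.1))

/-- Best responses via pair preferences in the general axiomatic CSR framework
over a hierarchical network with servers: for a non-server node `i` and an
admissible placement `P`, (1) a strictly better unilateral deviation yields a
strict pair preference, and (2) storing an object maximizing the pair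
`(γ, d(i, σ_i(P_{-i}, γ)))` under the preorder induced by `⊳_i` is a best
response of `i` to `P_{-i}`. -/
theorem pair_preference_best_response
    {V O : Type*} [Fintype V] [Fintype O] [Nonempty V] [Nonempty O] [DecidableEq V]
    (d : V → V → ℝ)
    (hd_diag : ∀ i, d i i = 0) (hd_nonneg : ∀ i j, 0 ≤ d i j)
    (hsym : ∀ i j, d i j = d j i)
    (hultra : ∀ i j k, d i k ≤ max (d i j) (d j k))
    (upref : V → (V → O) → (V → O) → Prop)
    (hrefl : ∀ i P, upref i P P)
    (htotal : ∀ i P Q, upref i P Q ∨ upref i Q P)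
    (htrans : ∀ i P Q R, upref i P Q → upref i Q R → upref i P R)
    (hmono : ∀ (i : V) (P Q : V → O),
      (∀ (α : O) (q : V), Q q = α → ∃ p, P p = α ∧ d i p ≤ d i q) → upref i P Q)
    (hcons : ∀ (i : V) (P Q : V → O),
      (∀ α : O, (α = P i ∨ α = Q i) → ∀ p q : V,
        MostPrefHolder d i α P p → MostPrefHolder d i α Q q → d i p = d i q) →
      UStrict upref i P (Function.update P i (Q i)) →
      upref i (Function.update Q i (P i)) Q)
    (s : O → V) (hs : Function.Injective s)
    (i : V) (hi : i ∉ Set.range s)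
    (P : V → O) (hP : ∀ γ, P (s γ) = γ) :
    (∀ (α β : O) (j k : V),
        MostPrefHolder d i α P j → MostPrefHolder d i β P k →
        UStrict upref i (Function.update P i β) (Function.update P i α) →
        PairLt d upref s i (β, d i k) (α, d i j)) ∧
    (∀ (α : O) (jα : V), MostPrefHolder d i α P jα →
        (∀ (γ : O) (jγ : V), MostPrefHolder d i γ P jγ →
          ¬ PairLt d upref s i (γ, d i jγ) (α, d i jα)) →
        ∀ β : O,
          ¬ UStrict upref i (Function.update P i β) (Function.update P i α)) := by
  classical
  have part1 : ∀ (α β : O) (j k : V),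
      MostPrefHolder d i α P j → MostPrefHolder d i β P k →
      UStrict upref i (Function.update P i β) (Function.update P i α) →
      PairLt d upref s i (β, d i k) (α, d i j) := by
    intro α β j k hj hk hstr
    by_cases hab : β = α
    · subst hab
      exact absurd hstr.1 hstr.2
    · exact Or.inr ⟨hab, k, j, hk.1, hj.1, rfl, rfl, P, hP, hk, hj, hstr⟩
  refine ⟨part1, ?_⟩
  intro α jα hjα hmax β hstr
  obtain ⟨k, hkmem, hkmin⟩ := Finset.exists_min_image
    (Finset.univ.filter (fun k => k ≠ i ∧ P k = β)) (d i)
    ⟨s β, by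
      simp only [Finset.mem_filter, Finset.mem_univ, true_and]
      exact ⟨fun h => hi ⟨β, h⟩, hP β⟩⟩
  simp only [Finset.mem_filter, Finset.mem_univ, true_and] at hkmem
  have hkmph : MostPrefHolder d i β P k := by
    refine ⟨hkmem.1, hkmem.2, fun m hm1 hm2 => hkmin m ?_⟩
    simp only [Finset.mem_filter, Finset.mem_univ, true_and]
    exact ⟨hm1, hm2⟩
  exact hmax β k hkmph (part1 α β jα k hjα hkmph hstr)
end

section
/- Potential function for binary CSR games on undirected networks: fix a CSR game with sum utilities whose access cost function d is symmetric and whose weights are binary (r(i,α) ∈ {0,1}; write S_i = {α : r(i,α) = 1}). For a placement P define Φ_0(P) = |{i ∈ V : P(i) ∈ S_i}|, Φ_i(P) = min(D, min{ d(i,j) : j ≠ i, P(j) = P(i) }), and let Λ(P) be the list of the values Φ_i(P), i ∈ V, sorted in nondecreasing order. If a node i strictly decreases its cost by a unilateral deviation, i.e., Q = P[i ↦ β] with cost_i(Q) < cost_i(P), then either Φ_0(Q) > Φ_0(P), or Φ_0(Q) = Φ_0(P) and Λ(Q) is strictly greater than Λ(P) in the lexicographic order on lists of length |V|. -/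
open Finset

/-- `Φ_i(P)`: distance from `i` to the nearest other node holding the same
object as `i` (or the server cost `D`). -/
noncomputable def phiNode {V O : Type*} [Fintype V] [DecidableEq V] [DecidableEq O]
    (d : V → V → ℝ) (D : ℝ) (P : V → O) (i : V) : ℝ :=
  haveI := Classical.decEq ℝ
  (insert D ((Finset.univ.filter (fun j => j ≠ i ∧ P j = P i)).image (d i))).min'
    (Finset.insert_nonempty _ _)

/-- `Φ_0(P)`: the number of nodes storing an object they are interested in. -/
noncomputable def phiZero {V O : Type*} [Fintype V]
    (r : V → O → ℝ) (P : V → O) : ℕ :=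
  haveI := Classical.decEq ℝ
  (Finset.univ.filter (fun i => r i (P i) = 1)).card

/-- `Λ(P)`: the multiset of values `Φ_i(P)` sorted in nondecreasing order. -/
noncomputable def phiList {V O : Type*} [Fintype V] [DecidableEq V] [DecidableEq O]
    (d : V → V → ℝ) (D : ℝ) (P : V → O) : List ℝ :=
  (Finset.univ.val.map (fun i : V => phiNode d D P i)).sort (· ≤ ·)

/-!
An improving move of `i` from `P i` to `β` lowers its cost by
`r i β * Φ_i(Q) - r i (P i) * Φ_i(P)`, where `Q = P[i ↦ β]`, so necessarily `r i β = 1`.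
If `r i (P i) = 0`, then `Φ_0` grows. Otherwise `Φ_0` is unchanged and `Φ_i(P) < Φ_i(Q)`,
while for `j ≠ i` the only new copy near `j` is the one at `i`, at distance
`d j i = d i j ≥ Φ_i(Q)`; hence `Φ_j(Q) ≥ min Φ_j(P) Φ_i(Q)`. Matching `Φ_j(P)` with `Φ_j(Q)`
this way and peeling off common minima shows that the sorted list strictly increases.
-/

section SortedLex

variable {α : Type*} [LinearOrder α]

theorem Multiset.exists_sort_eq_cons_min {s : Multiset α} (hs : s ≠ 0) :
    ∃ m ∈ s, (∀ b ∈ s, m ≤ b) ∧ s.sort (· ≤ ·) = m :: (s.erase m).sort (· ≤ ·) := by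
  obtain ⟨m, hm, hmin⟩ := Multiset.exists_min_image id hs
  refine ⟨m, hm, hmin, ?_⟩
  conv_lhs => rw [← Multiset.cons_erase hm]
  exact Multiset.sort_cons _ _ _ fun b hb => hmin b (Multiset.mem_of_mem_erase hb)

theorem lex_sort_cons_of_rel_min_le {x y : α} (hxy : x < y) (s t : Multiset α)
    (hst : Multiset.Rel (fun a b => min a y ≤ b) s t) :
    List.Lex (· < ·) ((x ::ₘ s).sort (· ≤ ·)) ((y ::ₘ t).sort (· ≤ ·)) := by
  induction s using Multiset.strongInductionOn generalizing t with
  | ih s ih =>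
  obtain ⟨m, -, hmin, hsort_s⟩ := Multiset.exists_sort_eq_cons_min
    (Multiset.cons_ne_zero : x ::ₘ s ≠ 0)
  obtain ⟨c, hc, -, hsort_t⟩ := Multiset.exists_sort_eq_cons_min
    (Multiset.cons_ne_zero : y ::ₘ t ≠ 0)
  rw [hsort_s, hsort_t]
  have hmy : m < y := (hmin x (Multiset.mem_cons_self _ _)).trans_lt hxy
  have hmc : m ≤ c := by
    rcases Multiset.mem_cons.1 hc with rfl | hct
    · exact hmy.le
    · obtain ⟨a, has, hac⟩ := Multiset.exists_mem_of_rel_of_mem (Multiset.rel_flip.2 hst) hct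
      exact (le_min (hmin a (Multiset.mem_cons_of_mem has)) hmy.le).trans hac
  rcases hmc.lt_or_eq with hmc | rfl
  · exact List.Lex.rel hmc
  have hmt : m ∈ t := (Multiset.mem_cons.1 hc).resolve_left hmy.ne
  rw [← Multiset.cons_erase hmt] at hst
  obtain ⟨a, s', ham, hst', rfl⟩ := Multiset.rel_cons_right.1 hst
  obtain rfl : a = m := le_antisymm
    ((min_le_iff.1 ham).resolve_right hmy.not_ge) (hmin a (by simp))
  rw [Multiset.cons_swap, Multiset.erase_cons_head, Multiset.erase_cons_tail _ hmy.ne']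
  exact List.Lex.cons (ih s' (Multiset.lt_cons_self s' a) _ hst')

theorem lex_sort_map_univ_of_lt {ι : Type*} [Fintype ι] [DecidableEq ι] {f g : ι → α} {i : ι}
    (hi : f i < g i) (h : ∀ j ≠ i, min (f j) (g i) ≤ g j) :
    List.Lex (· < ·) ((univ.val.map f).sort (· ≤ ·)) ((univ.val.map g).sort (· ≤ ·)) := by
  have huniv : (univ : Finset ι).val = i ::ₘ (univ.erase i).val := by
    rw [erase_val, Multiset.cons_erase (mem_univ i)]
  rw [huniv, Multiset.map_cons, Multiset.map_cons]
  exact lex_sort_cons_of_rel_min_le hi _ _ <| Multiset.rel_map.2 <|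
    Multiset.rel_refl_of_refl_on fun j hj => h j (ne_of_mem_erase hj)

end SortedLex

section CSRGame

open Function

variable {V O : Type*} [Fintype V] [DecidableEq O] (d : V → V → ℝ) (D : ℝ)

theorem accessCost_eq_zero {P : V → O} {i : V} {α : O} (hD : 0 ≤ D) (hd : ∀ j, 0 ≤ d i j)
    (hii : d i i = 0) (h : P i = α) : accessCost d D P i α = 0 := by
  unfold accessCost
  refine le_antisymm (min'_le _ _ ?_) (le_min' _ _ _ ?_)
  · exact mem_insert_of_mem (mem_image.2 ⟨i, mem_filter.2 ⟨mem_univ i, h⟩, hii⟩)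
  · simp only [mem_insert, mem_image, mem_filter]
    rintro _ (rfl | ⟨j, -, rfl⟩)
    exacts [hD, hd j]

variable [DecidableEq V]

theorem accessCost_update_of_ne {P : V → O} {i k : V} {β γ : O} (hγP : γ ≠ P i) (hγβ : γ ≠ β) :
    accessCost d D (update P i β) k γ = accessCost d D P k γ := by
  unfold accessCost
  congr 4
  ext j
  by_cases hj : j = i
  · subst hj; simp [Ne.symm hγP, Ne.symm hγβ]
  · simp [hj]

theorem accessCost_update_self {P : V → O} {i : V} {β : O} (hβ : β ≠ P i) :
    accessCost d D (update P i β) i (P i) = phiNode d D P i := by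
  unfold accessCost phiNode
  congr 4
  ext j
  by_cases hj : j = i
  · subst hj; simp [hβ]
  · simp [hj]

theorem accessCost_eq_phiNode_update {P : V → O} {i : V} {β : O} (hβ : β ≠ P i) :
    accessCost d D P i β = phiNode d D (update P i β) i := by
  unfold accessCost phiNode
  congr 4
  ext j
  by_cases hj : j = i
  · subst hj; simp [Ne.symm hβ]
  · simp [hj]

theorem phiNode_nonneg {P : V → O} {i : V} (hD : 0 ≤ D) (hd : ∀ j, 0 ≤ d i j) :
    0 ≤ phiNode d D P i := by
  unfold phiNode
  refine le_min' _ _ _ ?_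
  simp only [mem_insert, mem_image, mem_filter]
  rintro _ (rfl | ⟨j, -, rfl⟩)
  exacts [hD, hd j]

theorem phiNode_le_server (P : V → O) (i : V) : phiNode d D P i ≤ D :=
  min'_le _ _ (mem_insert_self _ _)

theorem phiNode_le {P : V → O} {i j : V} (hji : j ≠ i) (h : P j = P i) :
    phiNode d D P i ≤ d i j :=
  min'_le _ _ (mem_insert_of_mem (mem_image.2 ⟨j, mem_filter.2 ⟨mem_univ j, hji, h⟩, rfl⟩))

theorem le_phiNode {P : V → O} {i : V} {c : ℝ} (hD : c ≤ D)
    (h : ∀ j ≠ i, P j = P i → c ≤ d i j) : c ≤ phiNode d D P i := by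
  unfold phiNode
  refine le_min' _ _ _ ?_
  simp only [mem_insert, mem_image, mem_filter]
  rintro _ (rfl | ⟨j, ⟨-, hji, hj⟩, rfl⟩)
  exacts [hD, h j hji hj]

theorem min_phiNode_le_phiNode_update (hsym : ∀ i j, d i j = d j i) {P : V → O} {i j : V}
    {β : O} (hji : j ≠ i) :
    min (phiNode d D P j) (phiNode d D (update P i β) i) ≤ phiNode d D (update P i β) j := by
  refine le_phiNode d D ((min_le_left _ _).trans (phiNode_le_server d D P j)) fun k hkj hk => ?_
  by_cases hki : k = i
  · subst hki
    calc min (phiNode d D P j) (phiNode d D (update P k β) k)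
        ≤ phiNode d D (update P k β) k := min_le_right _ _
      _ ≤ d k j := phiNode_le d D hji hk.symm
      _ = d j k := hsym k j
  · rw [update_of_ne hki, update_of_ne hji] at hk
    exact (min_le_left _ _).trans (phiNode_le d D hkj hk)

variable [Fintype O]

theorem nodeCost_sub_nodeCost_update (r : V → O → ℝ) {P : V → O} {i : V} {β : O}
    (hβ : β ≠ P i) (hD : 0 ≤ D) (hd : ∀ j, 0 ≤ d i j) (hii : d i i = 0) :
    nodeCost d r D P i - nodeCost d r D (update P i β) i =
      r i β * phiNode d D (update P i β) i - r i (P i) * phiNode d D P i := by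
  unfold nodeCost
  rw [← sum_sub_distrib, Fintype.sum_eq_add β (P i) hβ]
  · rw [accessCost_eq_zero d D hD hd hii (update_self i β P),
      accessCost_eq_zero d D hD hd hii rfl, accessCost_eq_phiNode_update d D hβ,
      accessCost_update_self d D hβ]
    ring
  · rintro γ ⟨hγβ, hγP⟩
    rw [accessCost_update_of_ne d D hγP hγβ, sub_self]

end CSRGame

section PhiZero

open Function

variable {V O : Type*} [Fintype V] [DecidableEq V] (r : V → O → ℝ)

theorem phiZero_update_of_eq {P : V → O} {i : V} {β : O} (h : r i β = r i (P i)) :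
    phiZero r (update P i β) = phiZero r P := by
  unfold phiZero
  congr 1
  ext j
  by_cases hj : j = i
  · subst hj; simp [h]
  · simp [hj]

theorem phiZero_lt_update {P : V → O} {i : V} {β : O} (hP : r i (P i) ≠ 1) (hβ : r i β = 1) :
    phiZero r P < phiZero r (update P i β) := by
  unfold phiZero
  refine card_lt_card ((ssubset_iff_of_subset fun j hj => ?_).2 ⟨i, by simp [hβ], by simp [hP]⟩)
  have hji : j ≠ i := by rintro rfl; exact hP (mem_filter.1 hj).2
  simpa [hji] using hj

end PhiZero

theorem binary_csr_potential_increases_general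
    {V O : Type*} [Fintype V] [Fintype O]
    [DecidableEq V] [DecidableEq O]
    (d : V → V → ℝ) (r : V → O → ℝ) (D : ℝ)
    (hd_nonneg : ∀ i j, 0 ≤ d i j) (hd_diag : ∀ i, d i i = 0)
    (hD : ∀ i j, d i j ≤ D)
    (hsym : ∀ i j, d i j = d j i)
    (hbin : ∀ i α, r i α = 0 ∨ r i α = 1)
    (P : V → O) (i : V) (β : O) :
    nodeCost d r D (Function.update P i β) i < nodeCost d r D P i →
      phiZero r P < phiZero r (Function.update P i β) ∨
      (phiZero r (Function.update P i β) = phiZero r P ∧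
        List.Lex (· < ·) (phiList d D P) (phiList d D (Function.update P i β))) := by
  intro hcost
  have hβ : β ≠ P i := by
    rintro rfl
    rw [Function.update_eq_self] at hcost
    exact hcost.false
  have hD0 : 0 ≤ D := hd_diag i ▸ hD i i
  have hgain := nodeCost_sub_nodeCost_update d D r hβ hD0 (hd_nonneg i) (hd_diag i) ▸
    sub_pos.2 hcost
  have hφ : 0 ≤ phiNode d D P i := phiNode_nonneg d D hD0 (hd_nonneg i)
  have hrβ : r i β = 1 := (hbin i β).resolve_left fun h0 => by
    rcases hbin i (P i) with h | h <;> rw [h0, h] at hgain <;> linarith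
  rcases hbin i (P i) with hrP | hrP
  · exact .inl (phiZero_lt_update r (by rw [hrP]; exact zero_ne_one) hrβ)
  · rw [hrP, hrβ, one_mul, one_mul, sub_pos] at hgain
    exact .inr ⟨phiZero_update_of_eq r (hrβ.trans hrP.symm),
      lex_sort_map_univ_of_lt hgain fun j hj => min_phiNode_le_phiNode_update d D hsym hj⟩

/-- Potential function argument for binary CSR games on undirected networks:
any strict unilateral improvement step strictly increases the potential
`(Φ_0, Λ)` lexicographically. -/
theorem binary_csr_potential_increases
    {V O : Type*} [Fintype V] [Fintype O] [Nonempty V] [Nonempty O]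
    [DecidableEq V] [DecidableEq O]
    (d : V → V → ℝ) (r : V → O → ℝ) (D : ℝ)
    (hd_nonneg : ∀ i j, 0 ≤ d i j) (hd_diag : ∀ i, d i i = 0)
    (hr_nonneg : ∀ i α, 0 ≤ r i α) (hD : ∀ i j, d i j ≤ D)
    (hsym : ∀ i j, d i j = d j i)
    (hbin : ∀ i α, r i α = 0 ∨ r i α = 1)
    (P : V → O) (i : V) (β : O) :
    nodeCost d r D (Function.update P i β) i < nodeCost d r D P i →
      phiZero r P < phiZero r (Function.update P i β) ∨
      (phiZero r (Function.update P i β) = phiZero r P ∧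
        List.Lex (· < ·) (phiList d D P) (phiList d D (Function.update P i β))) :=
  binary_csr_potential_increases_general d r D hd_nonneg hd_diag hD hsym hbin P i β
end

section
/- Reduction from arbitrary cache capacities to unit caches (sum utilities): fix a capacitated CSR game with sum utilities and its expanded unit-capacity game (as in the context), and let f map each placement P' of the expanded game to the capacitated placement f(P') with f(P')_i = { P'(i,k) : 1 ≤ k ≤ c(i) }. Then (1) for every placement P' of the expanded game, every node i ∈ V and every 1 ≤ k ≤ c(i), the cost of node (i,k) in the expanded game under P' equals cost_i(f(P')) in the capacitated game; and (2) P' is a pure Nash equilibrium of the expanded game if and only if f(P') is a pure Nash equilibrium of the capacitated game. -/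
/-!
Part (1) holds because each copy `(j, l)` is at the same distance `d i j` from `(i, k)` as `j` is
from `i`, so the expanded access costs are those of the collapsed placement. For part (2) fix a
node `i`: it pays `0` for the objects it holds and a remote cost `e α`, independent of its own
cache, for the others. Hence its cost with cache `Q` is `∑ α, r i α * e α - ∑ α ∈ Q, r i α * e α`,
and a best response maximises the nonnegative modular weight `α ↦ r i α * e α` over `#Q ≤ c i`.
An equilibrium of the expanded game only says that no single entry of the cache can be swapped
profitably, but for such weights this local optimality is global: if the entries are distinct,
every object outside the cache weighs at most every object inside; if one is duplicated, it can
be overwritten for free, so every object outside weighs `0`.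
-/

open Finset

/-- Access cost in the capacitated game: node `i` accesses object `α` from the
nearest node whose cache contains `α`, or from the server at cost `D`. -/
noncomputable def accessCostCap {V O : Type*} [Fintype V] [DecidableEq O]
    (d : V → V → ℝ) (D : ℝ) (P : V → Finset O) (i : V) (α : O) : ℝ :=
  haveI := Classical.decEq ℝ
  (insert D ((Finset.univ.filter (fun j => α ∈ P j)).image (d i))).min'
    (Finset.insert_nonempty _ _)

/-- Total cost of node `i` in the capacitated game. -/
noncomputable def nodeCostCap {V O : Type*} [Fintype V] [Fintype O] [DecidableEq O]
    (d : V → V → ℝ) (r : V → O → ℝ) (D : ℝ) (P : V → Finset O) (i : V) : ℝ :=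
  ∑ α : O, r i α * accessCostCap d D P i α

/-- Access cost in the expanded unit-capacity game, whose nodes are the pairs
`(i, k)` with `i ∈ V` and `k < c i`, with distances inherited from `V`. -/
noncomputable def accessCostExp {V O : Type*} [Fintype V] [DecidableEq V] [DecidableEq O]
    (d : V → V → ℝ) (D : ℝ) (c : V → ℕ)
    (P' : ((i : V) × Fin (c i)) → O) (v : (i : V) × Fin (c i)) (α : O) : ℝ :=
  haveI := Classical.decEq ℝ
  (insert D ((Finset.univ.filter (fun w : (i : V) × Fin (c i) => P' w = α)).image
      (fun w => d v.1 w.1))).min' (Finset.insert_nonempty _ _)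

/-- Total cost of node `v = (i,k)` in the expanded unit-capacity game. -/
noncomputable def nodeCostExp {V O : Type*} [Fintype V] [Fintype O] [DecidableEq V] [DecidableEq O]
    (d : V → V → ℝ) (r : V → O → ℝ) (D : ℝ) (c : V → ℕ)
    (P' : ((i : V) × Fin (c i)) → O) (v : (i : V) × Fin (c i)) : ℝ :=
  ∑ α : O, r v.1 α * accessCostExp d D c P' v α

/-- The map `f` sending a placement of the expanded game to the corresponding
capacitated placement: node `i` stores the set of objects stored by its copies. -/
def collapsePlacement {V O : Type*} [DecidableEq O] (c : V → ℕ)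
    (P' : ((i : V) × Fin (c i)) → O) : V → Finset O :=
  fun i => Finset.univ.image (fun k : Fin (c i) => P' ⟨i, k⟩)

namespace Finset

variable {ι M : Type*} [AddCommMonoid M] [LinearOrder M] [IsOrderedCancelAddMonoid M]

theorem sum_le_sum_of_card_le_of_forall_le {s t : Finset ι} {f : ι → M} (hcard : #s ≤ #t)
    (hle : ∀ a ∈ s, ∀ b ∈ t, f a ≤ f b) (ht : ∀ b ∈ t, 0 ≤ f b) :
    ∑ a ∈ s, f a ≤ ∑ b ∈ t, f b := by
  rcases t.eq_empty_or_nonempty with rfl | htne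
  · obtain rfl : s = ∅ := by simpa using hcard
    rfl
  calc ∑ a ∈ s, f a ≤ #s • t.inf' htne f :=
        sum_le_card_nsmul _ _ _ fun a ha => le_inf' _ _ fun b hb => hle a ha b hb
    _ ≤ #t • t.inf' htne f := nsmul_le_nsmul_left (le_inf' _ _ ht) hcard
    _ ≤ ∑ b ∈ t, f b := card_nsmul_le_sum _ _ _ fun b hb => inf'_le _ hb

variable [DecidableEq ι]

theorem image_update_of_mem {κ : Type*} [DecidableEq κ] {s : Finset κ} {k : κ} (hk : k ∈ s)
    (g : κ → ι) (b : ι) :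
    s.image (Function.update g k b) = insert b ((s.erase k).image g) := by
  conv_lhs => rw [← insert_erase hk]
  rw [image_insert, Function.update_self]
  congr 1
  exact image_congr fun l hl => Function.update_of_ne (ne_of_mem_erase hl) _ _

theorem sum_le_sum_image_of_forall_sum_image_update_le {n : ℕ} {g : Fin n → ι} {f : ι → M}
    (hf : ∀ a, 0 ≤ f a)
    (hg : ∀ k b, ∑ a ∈ univ.image (Function.update g k b), f a ≤ ∑ a ∈ univ.image g, f a)
    {Q : Finset ι} (hQ : #Q ≤ n) :
    ∑ a ∈ Q, f a ≤ ∑ a ∈ univ.image g, f a := by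
  set S := univ.image g
  have hswap : ∀ k b, b ∉ S → f b + ∑ a ∈ (univ.erase k).image g, f a ≤ ∑ a ∈ S, f a := by
    intro k b hb
    have hbT : b ∉ (univ.erase k).image g := fun h => hb (image_subset_image (erase_subset _ _) h)
    simpa [image_update_of_mem (mem_univ k), sum_insert hbT] using hg k b
  have houtside_le : ∀ b ∉ S, ∀ a ∈ S, f b ≤ f a := by
    intro b hb a ha
    obtain ⟨k, -, rfl⟩ := mem_image.1 ha
    set T := (univ.erase k).image g
    have hS : S = insert (g k) T := by
      simpa [S] using image_update_of_mem (mem_univ k) g (g k)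
    have hST : ∑ a ∈ S, f a ≤ f (g k) + ∑ a ∈ T, f a := by
      rw [hS]
      by_cases h : g k ∈ T
      · rw [insert_eq_of_mem h]
        exact le_add_of_nonneg_left (hf _)
      · rw [sum_insert h]
    exact le_of_add_le_add_right ((hswap k b hb).trans hST)
  have houtside_nonpos : ¬ Function.Injective g → ∀ b ∉ S, f b ≤ 0 := by
    intro hinj b hb
    -- overwriting one of two equal entries `g k = g l` by `b` keeps all of `S`
    obtain ⟨k, l, hkl, hgkl⟩ : ∃ k l, k ≠ l ∧ g k = g l := by
      simpa [Function.Injective, and_comm] using hinj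
    have hST : S ⊆ (univ.erase k).image g := by
      intro a ha
      obtain ⟨m, -, rfl⟩ := mem_image.1 ha
      by_cases hm : m = k
      · exact mem_image.2 ⟨l, mem_erase.2 ⟨hkl.symm, mem_univ l⟩, by rw [hm, hgkl]⟩
      · exact mem_image_of_mem g (mem_erase.2 ⟨hm, mem_univ m⟩)
    have key : f b + ∑ a ∈ S, f a ≤ ∑ a ∈ S, f a :=
      calc f b + ∑ a ∈ S, f a ≤ f b + ∑ a ∈ (univ.erase k).image g, f a :=
          add_le_add le_rfl (sum_le_sum_of_subset_of_nonneg hST fun a _ _ => hf a)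
        _ ≤ ∑ a ∈ S, f a := hswap k b hb
    exact add_le_iff_nonpos_left.1 key
  have hdiff : ∑ a ∈ Q \ S, f a ≤ ∑ a ∈ S \ Q, f a := by
    by_cases hinj : Function.Injective g
    · refine sum_le_sum_of_card_le_of_forall_le ?_ (fun b hb a ha =>
        houtside_le b (mem_sdiff.1 hb).2 a (mem_sdiff.1 ha).1) fun a _ => hf a
      have hS : #S = n := by simp [S, card_image_of_injective _ hinj]
      have hQ' := card_sdiff_add_card_inter Q S
      have hS' := card_sdiff_add_card_inter S Q
      rw [inter_comm] at hS'
      omega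
    · exact (sum_nonpos fun b hb => houtside_nonpos hinj b (mem_sdiff.1 hb).2).trans
        (sum_nonneg fun a _ => hf a)
  calc ∑ a ∈ Q, f a = ∑ a ∈ Q ∩ S, f a + ∑ a ∈ Q \ S, f a := (sum_inter_add_sum_sdiff _ _ _).symm
    _ ≤ ∑ a ∈ S ∩ Q, f a + ∑ a ∈ S \ Q, f a := by rw [inter_comm]; gcongr
    _ = ∑ a ∈ S, f a := sum_inter_add_sum_sdiff _ _ _

end Finset

section CapacitatedGame

variable {V O : Type*} [Fintype V] [DecidableEq O] {d : V → V → ℝ} {D : ℝ}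
  {P : V → Finset O} {i : V} {α : O}

theorem accessCostCap_nonneg (hd : ∀ j, 0 ≤ d i j) (hD : 0 ≤ D) :
    0 ≤ accessCostCap d D P i α := by
  unfold accessCostCap
  refine le_min' _ _ _ fun x hx => ?_
  obtain rfl | ⟨j, -, rfl⟩ := mem_insert.1 hx |>.imp id mem_image.1
  exacts [hD, hd j]

theorem accessCostCap_of_mem (hd : ∀ j, 0 ≤ d i j) (hii : d i i = 0) (hD : 0 ≤ D)
    (h : α ∈ P i) : accessCostCap d D P i α = 0 :=
  le_antisymm (min'_le _ _ (mem_insert_of_mem (mem_image.2 ⟨i, by simp [h], hii⟩)))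
    (accessCostCap_nonneg hd hD)

variable [DecidableEq V]

noncomputable def remoteAccessCost (d : V → V → ℝ) (D : ℝ) (P : V → Finset O) (i : V)
    (α : O) : ℝ :=
  accessCostCap d D (Function.update P i ∅) i α

theorem accessCostCap_of_notMem (h : α ∉ P i) :
    accessCostCap d D P i α = remoteAccessCost d D P i α := by
  unfold remoteAccessCost accessCostCap
  congr 3
  ext j
  by_cases hj : j = i
  · subst hj; simp [h]
  · simp [hj]

theorem remoteAccessCost_update_self (Q : Finset O) :
    remoteAccessCost d D (Function.update P i Q) i = remoteAccessCost d D P i := by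
  funext α
  simp [remoteAccessCost]

variable [Fintype O] {r : V → O → ℝ}

theorem nodeCostCap_update_self (hd : ∀ j, 0 ≤ d i j) (hii : d i i = 0) (hD : 0 ≤ D)
    (Q : Finset O) :
    nodeCostCap d r D (Function.update P i Q) i =
      ∑ α, r i α * remoteAccessCost d D P i α - ∑ α ∈ Q, r i α * remoteAccessCost d D P i α := by
  rw [← remoteAccessCost_update_self (P := P) Q, nodeCostCap, ← univ_inter Q, ← sum_ite_mem,
    ← sum_sub_distrib]
  refine sum_congr rfl fun α _ => ?_
  by_cases hα : α ∈ Q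
  · simp [hα, accessCostCap_of_mem (P := Function.update P i Q) hd hii hD (by simpa using hα)]
  · simp [hα, accessCostCap_of_notMem (show α ∉ Function.update P i Q i by simpa using hα)]
theorem forall_nodeCostCap_le_update_image_update_iff (hd : ∀ j, 0 ≤ d i j) (hii : d i i = 0)
    (hD : 0 ≤ D) (hr : ∀ α, 0 ≤ r i α) {n : ℕ} {g : Fin n → O} (hg : P i = univ.image g) :
    (∀ k β, nodeCostCap d r D P i ≤
        nodeCostCap d r D (Function.update P i (univ.image (Function.update g k β))) i) ↔
      ∀ Q : Finset O, #Q ≤ n →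
        nodeCostCap d r D P i ≤ nodeCostCap d r D (Function.update P i Q) i := by
  conv => enter [1, k, β, 1]; rw [← Function.update_eq_self i P]
  conv => enter [2, Q, 2, 1]; rw [← Function.update_eq_self i P]
  simp only [nodeCostCap_update_self hd hii hD, sub_le_sub_iff_left, hg]
  refine ⟨fun h Q hQ => sum_le_sum_image_of_forall_sum_image_update_le
    (fun α => mul_nonneg (hr α) (accessCostCap_nonneg hd hD)) h hQ, fun h k β => h _ ?_⟩
  exact card_image_le.trans (card_univ.trans (Fintype.card_fin n)).le

end CapacitatedGame

section ExpandedGame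

variable {V O : Type*} [DecidableEq O] {c : V → ℕ}

theorem mem_collapsePlacement {P' : ((i : V) × Fin (c i)) → O} {j : V} {α : O} :
    α ∈ collapsePlacement c P' j ↔ ∃ k, P' ⟨j, k⟩ = α := by
  simp [collapsePlacement]

theorem collapsePlacement_update [DecidableEq V] (P' : ((i : V) × Fin (c i)) → O) (i : V)
    (k : Fin (c i)) (β : O) :
    collapsePlacement c (Function.update P' ⟨i, k⟩ β) =
      Function.update (collapsePlacement c P') i
        (univ.image (Function.update (fun l => P' ⟨i, l⟩) k β)) := by
  funext j
  by_cases hj : j = i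
  · subst hj
    simp only [collapsePlacement, Function.update_self]
    exact congrArg (univ.image ·) (Function.update_comp_eq_of_injective P' sigma_mk_injective k β)
  · simp [collapsePlacement, hj]

variable [Fintype V] [DecidableEq V] {d : V → V → ℝ} {D : ℝ}

theorem accessCostExp_eq_accessCostCap (P' : ((i : V) × Fin (c i)) → O)
    (v : (i : V) × Fin (c i)) (α : O) :
    accessCostExp d D c P' v α = accessCostCap d D (collapsePlacement c P') v.1 α := by
  unfold accessCostExp accessCostCap
  congr 2
  ext x
  simp [mem_collapsePlacement]

theorem nodeCostExp_eq_nodeCostCap [Fintype O] (r : V → O → ℝ) (P' : ((i : V) × Fin (c i)) → O)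
    (v : (i : V) × Fin (c i)) :
    nodeCostExp d r D c P' v = nodeCostCap d r D (collapsePlacement c P') v.1 := by
  simp only [nodeCostExp, nodeCostCap, accessCostExp_eq_accessCostCap]

end ExpandedGame

theorem capacitated_to_unit_cache_reduction_general
    {V O : Type*} [Fintype V] [Fintype O]
    [DecidableEq V] [DecidableEq O]
    (d : V → V → ℝ) (r : V → O → ℝ) (D : ℝ) (c : V → ℕ)
    (hd_nonneg : ∀ i j, 0 ≤ d i j) (hd_diag : ∀ i, d i i = 0)
    (hr_nonneg : ∀ i α, 0 ≤ r i α) (hD : ∀ i j, d i j ≤ D)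
    (P' : ((i : V) × Fin (c i)) → O) :
    (∀ (i : V) (k : Fin (c i)),
        nodeCostExp d r D c P' ⟨i, k⟩ = nodeCostCap d r D (collapsePlacement c P') i) ∧
    ((∀ (v : (i : V) × Fin (c i)) (β : O),
        nodeCostExp d r D c P' v ≤ nodeCostExp d r D c (Function.update P' v β) v) ↔
     (∀ (i : V) (Q : Finset O), Q.card ≤ c i →
        nodeCostCap d r D (collapsePlacement c P') i ≤
          nodeCostCap d r D (Function.update (collapsePlacement c P') i Q) i)) := by
  refine ⟨fun i k => nodeCostExp_eq_nodeCostCap r P' ⟨i, k⟩, ?_⟩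
  simp only [Sigma.forall, nodeCostExp_eq_nodeCostCap, collapsePlacement_update]
  exact forall_congr' fun i => forall_nodeCostCap_le_update_image_update_iff (hd_nonneg i)
    (hd_diag i) (hd_diag i ▸ hD i i) (hr_nonneg i) rfl

/-- Reduction from arbitrary cache capacities to unit caches for sum utilities:
(1) the cost of each copy `(i,k)` in the expanded game equals the cost of `i`
in the capacitated game under the collapsed placement, and (2) a placement of
the expanded game is a pure Nash equilibrium iff its collapse is a pure Nash
equilibrium of the capacitated game. -/
theorem capacitated_to_unit_cache_reduction
    {V O : Type*} [Fintype V] [Fintype O] [Nonempty V] [Nonempty O]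
    [DecidableEq V] [DecidableEq O]
    (d : V → V → ℝ) (r : V → O → ℝ) (D : ℝ) (c : V → ℕ)
    (hd_nonneg : ∀ i j, 0 ≤ d i j) (hd_diag : ∀ i, d i i = 0)
    (hr_nonneg : ∀ i α, 0 ≤ r i α) (hD : ∀ i j, d i j ≤ D)
    (hc : ∀ i, 1 ≤ c i)
    (P' : ((i : V) × Fin (c i)) → O) :
    (∀ (i : V) (k : Fin (c i)),
        nodeCostExp d r D c P' ⟨i, k⟩ = nodeCostCap d r D (collapsePlacement c P') i) ∧
    ((∀ (v : (i : V) × Fin (c i)) (β : O),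
        nodeCostExp d r D c P' v ≤ nodeCostExp d r D c (Function.update P' v β) v) ↔
     (∀ (i : V) (Q : Finset O), Q.card ≤ c i →
        nodeCostCap d r D (collapsePlacement c P') i ≤
          nodeCostCap d r D (Function.update (collapsePlacement c P') i Q) i)) :=
  capacitated_to_unit_cache_reduction_general d r D c hd_nonneg hd_diag hr_nonneg hD P'
end
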